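/- arXiv:2501.03784 — 4 statements merged into one kernel-verified Lean document; each statement's English description precedes it below -/
import Mathlib

section
/- Let U : ℝ^d → ℝ be measurable with U ≥ 0 and ∫_{ℝ^d} U(x) dx = 1, and let y ∈ Y. Define (Dy)(x,v) = (U * ρ_{μyv})(x) · v, where · denotes the Euclidean inner product on ℝ^d. Then Dy ∈ Y and ‖Dy‖_Y ≤ ‖y‖_Y. -/
open MeasureTheory
open scoped RealInnerProductSpace

noncomputable section

/-- `E d` is Euclidean space `ℝ^d`. -/
abbrev E (d : ℕ) := EuclideanSpace ℝ (Fin d)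

/-- The Maxwellian `μ(v) = (2π)^{-d/2} exp(-‖v‖²/2)`. -/
def maxwellian (d : ℕ) (v : E d) : ℝ :=
  (2 * Real.pi) ^ (-(d : ℝ) / 2) * Real.exp (-‖v‖ ^ 2 / 2)

/-- The weighted `L²_μ` norm `‖y‖_Y`. -/
def Ynorm (d : ℕ) (y : E d × E d → ℝ) : ℝ :=
  (∫ x : E d, ∫ v : E d, maxwellian d v * y (x, v) ^ 2) ^ ((1 : ℝ) / 2)

/-- Membership in `Y`: measurable with finite `‖·‖_Y` norm. -/
def memY (d : ℕ) (y : E d × E d → ℝ) : Prop :=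
  Measurable y ∧ Integrable (fun p : E d × E d => maxwellian d p.2 * y p ^ 2)

/-- `ρ_{μy}(x) = ∫ μ(v) y(x,v) dv`. -/
def rhoMu (d : ℕ) (y : E d × E d → ℝ) (x : E d) : ℝ :=
  ∫ v : E d, maxwellian d v * y (x, v)

/-- `ρ_{μyv}(x) = ∫ v μ(v) y(x,v) dv`. -/
def rhoMuV (d : ℕ) (y : E d × E d → ℝ) (x : E d) : E d :=
  ∫ v : E d, (maxwellian d v * y (x, v)) • v

/-- Gradient in the `v` variable. -/
def gradV (d : ℕ) (y : E d × E d → ℝ) (p : E d × E d) : E d :=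
  gradient (fun w => y (p.1, w)) p.2

/-- Gradient in the `x` variable. -/
def gradX (d : ℕ) (y : E d × E d → ℝ) (p : E d × E d) : E d :=
  gradient (fun w => y (w, p.2)) p.1

/-- The weighted norm of an `ℝ^d`-valued field, `‖F‖_{Y^d}`. -/
def YdNorm (d : ℕ) (F : E d × E d → E d) : ℝ :=
  (∫ x : E d, ∫ v : E d, maxwellian d v * ‖F (x, v)‖ ^ 2) ^ ((1 : ℝ) / 2)

/-- The `V_v = H¹_{μ,v}` norm. -/
def VvNorm (d : ℕ) (y : E d × E d → ℝ) : ℝ :=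
  (Ynorm d y ^ 2 + YdNorm d (gradV d y) ^ 2) ^ ((1 : ℝ) / 2)

/-- The `L²(ℝ^d)` norm of `U`. -/
def UL2norm (d : ℕ) (U : E d → ℝ) : ℝ :=
  (∫ x : E d, U x ^ 2) ^ ((1 : ℝ) / 2)

/-- Laplacian in the `v` variable. -/
def laplacianV (d : ℕ) (y : E d × E d → ℝ) (p : E d × E d) : ℝ :=
  ∑ i : Fin d,
    fderiv ℝ (fun w => fderiv ℝ (fun w' => y (p.1, w')) w (EuclideanSpace.single i 1)) p.2
      (EuclideanSpace.single i 1)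

/-- Laplacian in the `x` variable. -/
def laplacianX (d : ℕ) (y : E d × E d → ℝ) (p : E d × E d) : ℝ :=
  ∑ i : Fin d,
    fderiv ℝ (fun w => fderiv ℝ (fun w' => y (w', p.2)) w (EuclideanSpace.single i 1)) p.1
      (EuclideanSpace.single i 1)

/-- Divergence in the `v` variable of an `ℝ^d`-valued field. -/
def divV (d : ℕ) (F : E d × E d → E d) (p : E d × E d) : ℝ :=
  ∑ i : Fin d,
    fderiv ℝ (fun w => ⟪F (p.1, w), EuclideanSpace.single i 1⟫) p.2
      (EuclideanSpace.single i 1)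


namespace S0Aux
open Real Filter
open scoped ENNReal

def g1d (t : ℝ) : ℝ := (2 * π) ^ (-(1:ℝ)/2) * Real.exp (-t^2/2)

lemma twopi_pos : (0:ℝ) < 2 * π := by positivity

lemma c_pos : (0:ℝ) < (2 * π) ^ (-(1:ℝ)/2) := Real.rpow_pos_of_pos twopi_pos _

lemma exp_form (t : ℝ) : Real.exp (-t^2/2) = Real.exp (-(1/2 : ℝ) * t^2) := by ring_nf

lemma g1d_int : Integrable g1d := by
  unfold g1d
  simp_rw [exp_form]
  exact (integrable_exp_neg_mul_sq (by norm_num : (0:ℝ) < 1/2)).const_mul _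

lemma g1d_one : ∫ t, g1d t = 1 := by
  unfold g1d
  simp_rw [exp_form]
  rw [integral_const_mul, integral_gaussian]
  have h2 : π / (1/2 : ℝ) = 2 * π := by ring
  rw [h2, Real.sqrt_eq_rpow, ← Real.rpow_add twopi_pos]
  norm_num

lemma g1d_mul_int : Integrable (fun t => g1d t * t) := by
  have h := (integrable_mul_exp_neg_mul_sq (by norm_num : (0:ℝ) < 1/2)).const_mul
    ((2 * π) ^ (-(1:ℝ)/2))
  apply h.congr
  filter_upwards with t
  unfold g1d
  rw [exp_form]; ring

lemma g1d_mul_zero : ∫ t, g1d t * t = 0 := by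
  have hneg := (Measure.measurePreserving_neg (volume : Measure ℝ)).integral_comp
    (Homeomorph.neg ℝ).measurableEmbedding (fun t => g1d t * t)
  have hodd : ∀ t : ℝ, g1d (-t) * (-t) = -(g1d t * t) := by
    intro t; unfold g1d; rw [neg_sq]; ring
  simp only [hodd] at hneg
  rw [integral_neg] at hneg
  linarith

lemma g1d_sq_int : Integrable (fun t => g1d t * t^2) := by
  have h := (integrable_rpow_mul_exp_neg_mul_sq (by norm_num : (0:ℝ) < 1/2)
    (by norm_num : (-1:ℝ) < 2)).const_mul ((2 * π) ^ (-(1:ℝ)/2))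
  apply h.congr
  filter_upwards with t
  unfold g1d
  rw [exp_form]
  rw [show ((2:ℝ) : ℝ) = ((2:ℕ) : ℝ) by norm_num, Real.rpow_natCast]
  ring

lemma g1d_sq_one : ∫ t, g1d t * t^2 = 1 := by
  set c : ℝ := (2 * π) ^ (-(1:ℝ)/2) with hc
  have hu : ∀ x : ℝ, HasDerivAt (fun t : ℝ => c * t) c x := by
    intro x
    simpa using (hasDerivAt_id x).const_mul c
  have hv : ∀ x : ℝ, HasDerivAt (fun t : ℝ => -Real.exp (-t^2/2)) (x * Real.exp (-x^2/2)) x := by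
    intro x
    have h1 : HasDerivAt (fun t : ℝ => -t^2/2) (-x) x := by
      have := ((hasDerivAt_pow 2 x).div_const 2).neg
      simp only [Nat.cast_ofNat, pow_one] at this
      have e1 : (fun t : ℝ => -t^2/2) = -fun x => x^2/2 := by
        funext t; simp only [Pi.neg_apply]; ring
      rw [e1]; exact this.congr_deriv (by norm_num)
    have := (h1.exp).neg
    exact this.congr_deriv (by ring)
  have huv' : Integrable ((fun t : ℝ => c * t) * fun x => x * Real.exp (-x^2/2)) := by
    apply g1d_sq_int.congr
    filter_upwards with t
    simp only [Pi.mul_apply]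
    unfold g1d; ring
  have hu'v : Integrable ((fun _ : ℝ => c) * fun t : ℝ => -Real.exp (-t^2/2)) := by
    apply g1d_int.neg.congr
    filter_upwards with t
    simp only [Pi.mul_apply, Pi.neg_apply]
    unfold g1d; ring
  have huv : Integrable ((fun t : ℝ => c * t) * fun t : ℝ => -Real.exp (-t^2/2)) := by
    apply g1d_mul_int.neg.congr
    filter_upwards with t
    simp only [Pi.mul_apply, Pi.neg_apply]
    unfold g1d; ring
  have key := integral_mul_deriv_eq_deriv_mul_of_integrable (fun x _ => hu x) (fun x _ => hv x) huv' hu'v huv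
  have h2 : (∫ x : ℝ, c * -Real.exp (-x^2/2)) = -1 := by
    have : (fun x : ℝ => c * -Real.exp (-x^2/2)) = fun x => -(g1d x) := by
      funext x; unfold g1d; ring
    rw [this, integral_neg, g1d_one]
  calc ∫ t, g1d t * t^2 = ∫ x : ℝ, c * x * (x * Real.exp (-x^2/2)) := by
        congr 1; funext t; unfold g1d; ring
    _ = -∫ x : ℝ, c * -Real.exp (-x^2/2) := key
    _ = 1 := by rw [h2]; norm_num


variable {d : ℕ}

lemma normsq (v : E d) : ‖v‖^2 = ∑ i, (v i)^2 := by
  rw [EuclideanSpace.norm_eq, Real.sq_sqrt (by positivity)]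
  simp [Real.norm_eq_abs, sq_abs]

lemma maxwellian_pos (v : E d) : 0 < maxwellian d v :=
  mul_pos (Real.rpow_pos_of_pos twopi_pos _) (Real.exp_pos _)

lemma maxwellian_measurable : Measurable (maxwellian d) := by
  apply Measurable.const_mul
  exact (((measurable_norm.pow_const 2).neg.div_const 2).exp)

lemma maxwellian_prod (v : E d) : maxwellian d v = ∏ i, g1d (v i) := by
  unfold maxwellian g1d
  rw [Finset.prod_mul_distrib, Finset.prod_const, ← Real.exp_sum]
  congr 1
  · rw [← Real.rpow_natCast ((2*π) ^ (-(1:ℝ)/2)) (Finset.univ.card), ← Real.rpow_mul twopi_pos.le]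
    congr 1
    simp [Finset.card_univ]
    ring
  · congr 1
    rw [normsq, ← Finset.sum_div, Finset.sum_neg_distrib]

def phid (d : ℕ) := (MeasurableEquiv.toLp 2 (Fin d → ℝ)).symm

lemma integral_euclidean_eq_pi (F : E d → ℝ) :
    ∫ v : E d, F v = ∫ w : Fin d → ℝ, F ((phid d).symm w) :=
  ((MeasurePreserving.symm _ (EuclideanSpace.volume_preserving_symm_measurableEquiv_toLp (Fin d))).integral_comp
    (MeasurableEquiv.measurableEmbedding _) F).symm

lemma integrable_euclidean_iff (F : E d → ℝ) :
    Integrable F ↔ Integrable (fun w : Fin d → ℝ => F ((phid d).symm w)) := by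
  constructor
  · intro h
    exact ((MeasurePreserving.symm _ (EuclideanSpace.volume_preserving_symm_measurableEquiv_toLp (Fin d))).integrable_comp_emb
      (MeasurableEquiv.measurableEmbedding _)).2 h
  · intro h
    exact ((MeasurePreserving.symm _ (EuclideanSpace.volume_preserving_symm_measurableEquiv_toLp (Fin d))).integrable_comp_emb
      (MeasurableEquiv.measurableEmbedding _)).1 h

lemma phid_symm_apply (w : Fin d → ℝ) (i : Fin d) : (phid d).symm w i = w i := rfl

/-- the one-coordinate factor functions -/
def hfun (i j k : Fin d) : ℝ → ℝ :=
  fun t => g1d t * ((if k = i then t else 1) * (if k = j then t else 1))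

lemma hfun_int (i j k : Fin d) : Integrable (hfun i j k) := by
  unfold hfun
  by_cases hki : k = i <;> by_cases hkj : k = j <;> simp only [hki, hkj, if_pos, if_neg, if_true]
  all_goals simp_all
  · exact g1d_sq_int.congr (by filter_upwards with t; ring)
  · simpa using g1d_mul_int
  · simpa using g1d_mul_int
  · simpa using g1d_int

lemma hfun_integral_eq (i k : Fin d) : ∫ t, hfun i i k t = 1 := by
  unfold hfun
  by_cases hki : k = i
  · simp only [hki, eq_self_iff_true, if_true]
    rw [show (fun t => g1d t * (t * t)) = fun t => g1d t * t^2 by funext t; ring]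
    exact g1d_sq_one
  · simp only [if_neg hki, mul_one]
    simpa using g1d_one

lemma hfun_integral_zero (i j : Fin d) (hij : i ≠ j) : ∫ t, hfun i j i t = 0 := by
  unfold hfun
  simp only [if_pos rfl, if_neg hij, mul_one]
  exact g1d_mul_zero

lemma prod_identity (i j : Fin d) (w : Fin d → ℝ) :
    (∏ k, g1d (w k)) * (w i * w j) = ∏ k, hfun i j k (w k) := by
  unfold hfun
  rw [Finset.prod_mul_distrib, Finset.prod_mul_distrib]
  congr 1
  congr 1
  · simp [Finset.prod_ite_eq']
  · simp [Finset.prod_ite_eq']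

lemma base_int (i j : Fin d) : Integrable (fun v : E d => maxwellian d v * (v i * v j)) := by
  rw [integrable_euclidean_iff]
  have : (fun w : Fin d → ℝ => maxwellian d ((phid d).symm w) * ((phid d).symm w i * (phid d).symm w j))
      = fun w => ∏ k, hfun i j k (w k) := by
    funext w
    rw [maxwellian_prod]
    simp only [phid_symm_apply]
    exact prod_identity i j w
  rw [this]
  exact Integrable.fintype_prod (fun k => hfun_int i j k)

lemma base_eval (i j : Fin d) :
    ∫ v : E d, maxwellian d v * (v i * v j) = if i = j then 1 else 0 := by
  rw [integral_euclidean_eq_pi]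
  have : (fun w : Fin d → ℝ => maxwellian d ((phid d).symm w) * ((phid d).symm w i * (phid d).symm w j))
      = fun w => ∏ k, hfun i j k (w k) := by
    funext w
    rw [maxwellian_prod]
    simp only [phid_symm_apply]
    exact prod_identity i j w
  rw [this, MeasureTheory.integral_fintype_prod_volume_eq_prod (𝕜 := ℝ) (ι := Fin d) (fun k => hfun i j k)]
  by_cases hij : i = j
  · subst hij
    simp [hfun_integral_eq]
  · rw [if_neg hij]
    exact Finset.prod_eq_zero (Finset.mem_univ i) (hfun_integral_zero i j hij)

lemma inner_sum (a v : E d) : ⟪a, v⟫ = ∑ i, a i * v i := by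
  simp [PiLp.inner_apply, RCLike.inner_apply, conj_trivial]
  exact Finset.sum_congr rfl fun _ _ => mul_comm _ _

lemma expand (a : E d) (v : E d) :
    maxwellian d v * ⟪a, v⟫^2 = ∑ i, ∑ j, (a i * a j) * (maxwellian d v * (v i * v j)) := by
  rw [inner_sum, sq, Finset.sum_mul_sum]
  rw [Finset.mul_sum]
  congr 1; funext i
  rw [Finset.mul_sum]
  congr 1; funext j
  ring

lemma gauss_moment_int (a : E d) : Integrable (fun v : E d => maxwellian d v * ⟪a, v⟫^2) := by
  simp_rw [expand]
  apply integrable_finset_sum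
  intro i _
  apply integrable_finset_sum
  intro j _
  exact (base_int i j).const_mul _

lemma gauss_moment (a : E d) : ∫ v : E d, maxwellian d v * ⟪a, v⟫^2 = ‖a‖^2 := by
  simp_rw [expand]
  rw [integral_finset_sum _ (fun i _ => integrable_finset_sum _
    (fun j _ => (base_int i j).const_mul _))]
  have : ∀ i, ∫ v : E d, ∑ j, (a i * a j) * (maxwellian d v * (v i * v j))
      = ∑ j, (a i * a j) * ∫ v : E d, maxwellian d v * (v i * v j) := by
    intro i
    rw [integral_finset_sum _ (fun j _ => (base_int i j).const_mul _)]
    congr 1; funext j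
    rw [integral_const_mul]
  simp_rw [this, base_eval]
  rw [normsq]
  congr 1; funext i
  simp [Finset.sum_ite_eq, sq]

lemma gauss_norm_int : Integrable (fun v : E d => maxwellian d v * ‖v‖^2) := by
  have : (fun v : E d => maxwellian d v * ‖v‖^2)
      = fun v => ∑ i, maxwellian d v * (v i * v i) := by
    funext v
    rw [normsq, Finset.mul_sum]
    congr 1; funext i; ring
  rw [this]
  exact integrable_finset_sum _ (fun i _ => base_int i i)

lemma conj2 : (2:ℝ).HolderConjugate 2 := Real.HolderConjugate.two_two

lemma rpow_two_eq (r : ℝ) : r ^ (2:ℝ) = r ^ 2 := by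
  rw [show (2:ℝ) = ((2:ℕ):ℝ) by norm_num, Real.rpow_natCast]

lemma ofReal_two : ENNReal.ofReal (2:ℝ) = 2 := by norm_num

lemma stepC (y : E d × E d → ℝ) (hym : Measurable y) (x : E d)
    (hx : Integrable (fun v : E d => maxwellian d v * y (x, v)^2)) :
    ‖rhoMuV d y x‖^2 ≤ ∫ v : E d, maxwellian d v * y (x, v)^2 := by
  set Gx : E d := rhoMuV d y x with hGx
  set s : ℝ := ∫ v : E d, maxwellian d v * y (x, v)^2 with hs
  have hs0 : 0 ≤ s := integral_nonneg fun v => mul_nonneg (maxwellian_pos v).le (sq_nonneg _)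
  have hyxm : Measurable (fun v : E d => y (x, v)) := hym.comp measurable_prodMk_left
  have h1 : Integrable (fun v : E d => (maxwellian d v * y (x, v)) • v) := by
    apply Integrable.mono' ((hx.add gauss_norm_int).div_const 2)
    · exact ((maxwellian_measurable.mul hyxm).smul measurable_id).aestronglyMeasurable
    · filter_upwards with v
      rw [norm_smul, Real.norm_eq_abs, abs_mul, abs_of_nonneg (maxwellian_pos v).le]
      have h2 : |y (x, v)| * ‖v‖ ≤ (y (x, v)^2 + ‖v‖^2)/2 := by
        nlinarith [sq_nonneg (|y (x, v)| - ‖v‖), sq_abs (y (x, v)), abs_nonneg (y (x, v)),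
          norm_nonneg v]
      calc maxwellian d v * |y (x, v)| * ‖v‖ = maxwellian d v * (|y (x, v)| * ‖v‖) := by ring
        _ ≤ maxwellian d v * ((y (x, v)^2 + ‖v‖^2)/2) :=
            mul_le_mul_of_nonneg_left h2 (maxwellian_pos v).le
        _ = (maxwellian d v * y (x, v)^2 + maxwellian d v * ‖v‖^2)/2 := by ring
  have h1s : Integrable (fun v : E d => (maxwellian d v * y (x, v)) * ⟪Gx, v⟫) := by
    apply (h1.const_inner Gx).congr
    filter_upwards with v
    rw [real_inner_smul_right]
  have hGG : ‖Gx‖^2 = ∫ v : E d, (maxwellian d v * y (x, v)) * ⟪Gx, v⟫ := by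
    have h2 := integral_inner (𝕜 := ℝ) h1 Gx
    simp_rw [real_inner_smul_right] at h2
    have h3 : (⟪Gx, Gx⟫ : ℝ) = ‖Gx‖^2 := real_inner_self_eq_norm_sq Gx
    rw [← h3]
    exact h2.symm
  set f : E d → ℝ := fun v => Real.sqrt (maxwellian d v) * |y (x, v)| with hf
  set gg : E d → ℝ := fun v => Real.sqrt (maxwellian d v) * |⟪Gx, v⟫| with hgg
  have hfgg : ∀ v : E d, f v * gg v = maxwellian d v * |y (x, v) * ⟪Gx, v⟫| := by
    intro v
    rw [hf, hgg, abs_mul]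
    calc Real.sqrt (maxwellian d v) * |y (x, v)| * (Real.sqrt (maxwellian d v) * |⟪Gx, v⟫|)
        = (Real.sqrt (maxwellian d v) * Real.sqrt (maxwellian d v)) * (|y (x, v)| * |⟪Gx, v⟫|) :=
          by ring
      _ = maxwellian d v * (|y (x, v)| * |⟪Gx, v⟫|) := by
          rw [Real.mul_self_sqrt (maxwellian_pos v).le]
      _ = maxwellian d v * (|y (x, v)| * |⟪Gx, v⟫|) := rfl
  have habs : ∀ v : E d, (maxwellian d v * y (x, v)) * ⟪Gx, v⟫ ≤ f v * gg v := by
    intro v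
    rw [hfgg v, abs_mul]
    calc maxwellian d v * y (x, v) * ⟪Gx, v⟫ = maxwellian d v * (y (x, v) * ⟪Gx, v⟫) := by ring
      _ ≤ maxwellian d v * |y (x, v) * ⟪Gx, v⟫| :=
          mul_le_mul_of_nonneg_left (le_abs_self _) (maxwellian_pos v).le
      _ = maxwellian d v * (|y (x, v)| * |⟪Gx, v⟫|) := by rw [abs_mul]
  have hfgint : Integrable (fun v => f v * gg v) := by
    apply h1s.abs.congr
    filter_upwards with v
    rw [hfgg v, mul_assoc, abs_mul, abs_of_nonneg (maxwellian_pos v).le]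
  have hf2 : Integrable (fun v => f v ^ 2) := by
    apply hx.congr
    filter_upwards with v
    rw [hf]; simp only [mul_pow, sq_abs, Real.sq_sqrt (maxwellian_pos v).le]
  have hgg2 : Integrable (fun v => gg v ^ 2) := by
    apply (gauss_moment_int Gx).congr
    filter_upwards with v
    rw [hgg]; simp only [mul_pow, sq_abs, Real.sq_sqrt (maxwellian_pos v).le]
  have hfm : AEStronglyMeasurable f volume :=
    ((maxwellian_measurable.sqrt).mul hyxm.abs).aestronglyMeasurable
  have hggm : AEStronglyMeasurable gg volume :=
    ((maxwellian_measurable.sqrt).mul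
      ((measurable_const.inner measurable_id).abs)).aestronglyMeasurable
  have hmf : MemLp f (ENNReal.ofReal (2:ℝ)) volume := by
    rw [ofReal_two]; exact (memLp_two_iff_integrable_sq hfm).2 hf2
  have hmgg : MemLp gg (ENNReal.ofReal (2:ℝ)) volume := by
    rw [ofReal_two]; exact (memLp_two_iff_integrable_sq hggm).2 hgg2
  have h2 := integral_mul_le_Lp_mul_Lq_of_nonneg conj2
    (Eventually.of_forall fun v => mul_nonneg (Real.sqrt_nonneg _) (abs_nonneg _))
    (Eventually.of_forall fun v => mul_nonneg (Real.sqrt_nonneg _) (abs_nonneg _))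
    hmf hmgg
  simp_rw [rpow_two_eq] at h2
  rw [← Real.sqrt_eq_rpow, ← Real.sqrt_eq_rpow] at h2
  have hfs : ∫ v, f v ^ 2 = s := by
    apply integral_congr_ae
    filter_upwards with v
    rw [hf]; simp only [mul_pow, sq_abs, Real.sq_sqrt (maxwellian_pos v).le]
  have hgs : ∫ v, gg v ^ 2 = ‖Gx‖^2 := by
    rw [show ∫ v, gg v ^2 = ∫ v : E d, maxwellian d v * ⟪Gx, v⟫^2 from integral_congr_ae
      (by filter_upwards with v;
          rw [hgg]; simp only [mul_pow, sq_abs, Real.sq_sqrt (maxwellian_pos v).le])]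
    exact gauss_moment Gx
  rw [hfs, hgs] at h2
  -- assemble
  have hmain : ‖Gx‖^2 ≤ Real.sqrt s * Real.sqrt (‖Gx‖^2) :=
    le_trans (le_trans (le_of_eq hGG) (integral_mono h1s hfgint habs)) h2
  set t : ℝ := ‖Gx‖^2 with ht
  have ht0 : 0 ≤ t := sq_nonneg _
  rcases eq_or_lt_of_le ht0 with h0 | hpos
  · rw [← h0]; exact hs0
  · have hr : Real.sqrt s * Real.sqrt t = Real.sqrt (s * t) := (Real.sqrt_mul hs0 _).symm
    rw [hr] at hmain
    have h4 : t * t ≤ Real.sqrt (s*t) * Real.sqrt (s*t) :=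
      mul_self_le_mul_self ht0 hmain
    rw [Real.mul_self_sqrt (mul_nonneg hs0 ht0)] at h4
    exact le_of_mul_le_mul_right (by linarith) hpos
lemma lint_cs {α : Type*} [MeasurableSpace α] (μ : Measure α) (w h : α → ℝ≥0∞)
    (hw : AEMeasurable w μ) (hh : AEMeasurable h μ) (hw1 : ∫⁻ a, w a ∂μ ≤ 1) :
    (∫⁻ a, w a * h a ∂μ) ^ (2:ℝ) ≤ ∫⁻ a, w a * h a ^ (2:ℝ) ∂μ := by
  have hpq : (2:ℝ).HolderConjugate 2 := Real.HolderConjugate.two_two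
  have hwm : AEMeasurable (fun a => (w a) ^ ((1:ℝ)/2)) μ :=
    ENNReal.continuous_rpow_const.measurable.comp_aemeasurable hw
  have hgm : AEMeasurable (fun a => (w a) ^ ((1:ℝ)/2) * h a) μ := hwm.mul hh
  have key := ENNReal.lintegral_mul_le_Lp_mul_Lq μ hpq hwm hgm
  have e1 : ∀ a, (fun a => (w a) ^ ((1:ℝ)/2)) a * (fun a => (w a) ^ ((1:ℝ)/2) * h a) a
      = w a * h a := by
    intro a
    show (w a) ^ ((1:ℝ)/2) * ((w a) ^ ((1:ℝ)/2) * h a) = w a * h a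
    rw [← mul_assoc, ← ENNReal.rpow_add_of_nonneg _ _ (by norm_num) (by norm_num)]
    norm_num
  have e2 : ∀ a, ((w a) ^ ((1:ℝ)/2)) ^ (2:ℝ) = w a := by
    intro a
    rw [← ENNReal.rpow_mul]
    norm_num
  have e3 : ∀ a, ((w a) ^ ((1:ℝ)/2) * h a) ^ (2:ℝ) = w a * h a ^ (2:ℝ) := by
    intro a
    rw [ENNReal.mul_rpow_of_nonneg _ _ (by norm_num : (0:ℝ) ≤ 2), ← ENNReal.rpow_mul]
    norm_num
  simp only [Pi.mul_apply, e1, e2, e3] at key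
  have key2 : ∫⁻ a, w a * h a ∂μ ≤ (∫⁻ a, w a * h a ^ (2:ℝ) ∂μ) ^ ((1:ℝ)/2) := by
    refine le_trans key ?_
    have h1 : (∫⁻ a, w a ∂μ) ^ ((1:ℝ)/2) ≤ 1 := by
      calc (∫⁻ a, w a ∂μ) ^ ((1:ℝ)/2) ≤ (1:ℝ≥0∞) ^ ((1:ℝ)/2) :=
            ENNReal.rpow_le_rpow hw1 (by norm_num)
        _ = 1 := ENNReal.one_rpow _
    calc (∫⁻ a, w a ∂μ) ^ ((1:ℝ)/2) * (∫⁻ a, w a * h a ^ (2:ℝ) ∂μ) ^ ((1:ℝ)/2)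
        ≤ 1 * (∫⁻ a, w a * h a ^ (2:ℝ) ∂μ) ^ ((1:ℝ)/2) := by
          exact mul_le_mul_left h1 _
      _ = (∫⁻ a, w a * h a ^ (2:ℝ) ∂μ) ^ ((1:ℝ)/2) := one_mul _
  calc (∫⁻ a, w a * h a ∂μ) ^ (2:ℝ)
      ≤ ((∫⁻ a, w a * h a ^ (2:ℝ) ∂μ) ^ ((1:ℝ)/2)) ^ (2:ℝ) :=
        ENNReal.rpow_le_rpow key2 (by norm_num)
    _ = ∫⁻ a, w a * h a ^ (2:ℝ) ∂μ := by rw [← ENNReal.rpow_mul]; norm_num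

lemma ofReal_sq (r : ℝ) (hr : 0 ≤ r) :
    ENNReal.ofReal (r ^ 2) = (ENNReal.ofReal r) ^ (2:ℝ) := by
  rw [ENNReal.rpow_two, ENNReal.ofReal_pow hr]

end S0Aux

open Filter S0Aux
open scoped ENNReal

/-- If `U ≥ 0` is measurable with `∫ U = 1` and `y ∈ Y`, then
`Dy(x,v) = (U * ρ_{μyv})(x) ⬝ v` belongs to `Y` with `‖Dy‖_Y ≤ ‖y‖_Y`. -/
theorem statement0 (d : ℕ) (hd : 1 ≤ d) (U : E d → ℝ)
    (hUmeas : Measurable U) (hUnonneg : ∀ x, 0 ≤ U x)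
    (hUint : Integrable U) (hUone : ∫ x : E d, U x = 1)
    (y : E d × E d → ℝ) (hy : memY d y)
    (D : E d × E d → ℝ)
    (hD : ∀ p : E d × E d, D p = ⟪∫ x' : E d, U (p.1 - x') • rhoMuV d y x', p.2⟫) :
    memY d D ∧ Ynorm d D ≤ Ynorm d y := by
  obtain ⟨hym, hyint⟩ := hy
  set G : E d → E d := rhoMuV d y with hG
  set C : E d → E d := fun x => ∫ x' : E d, U (x - x') • G x' with hC
  have hDfun : D = fun p => ⟪C p.1, p.2⟫ := funext hD
  -- measurability
  have hGm : Measurable G := by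
    have hsm : StronglyMeasurable (fun p : E d × E d => (maxwellian d p.2 * y p) • p.2) :=
      (((maxwellian_measurable.comp measurable_snd).mul hym).smul measurable_snd).stronglyMeasurable
    have := hsm.integral_prod_right' (ν := volume)
    exact this.measurable
  have hCm : Measurable C := by
    have hsm : StronglyMeasurable (fun p : E d × E d => U (p.1 - p.2) • G p.2) :=
      ((hUmeas.comp (measurable_fst.sub measurable_snd)).smul
        (hGm.comp measurable_snd)).stronglyMeasurable
    exact (hsm.integral_prod_right' (ν := volume)).measurable
  have hDm : Measurable D := by
    rw [hDfun]
    exact (hCm.comp measurable_fst).inner measurable_snd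
  -- slicewise identities
  have hslice : ∀ x : E d, ∫ v : E d, maxwellian d v * D (x, v)^2 = ‖C x‖^2 := by
    intro x
    simp only [hDfun]
    exact gauss_moment (C x)
  have hsliceInt : ∀ x : E d, Integrable (fun v : E d => maxwellian d v * D (x, v)^2) := by
    intro x
    simp only [hDfun]
    exact gauss_moment_int (C x)
  -- y-side quantities
  set ψ : E d → ℝ := fun x => ∫ v : E d, maxwellian d v * y (x, v)^2 with hψ
  have hψnn : ∀ x, 0 ≤ ψ x := fun x =>
    integral_nonneg fun v => mul_nonneg (maxwellian_pos v).le (sq_nonneg _)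
  have hyint' : Integrable (fun p : E d × E d => maxwellian d p.2 * y p ^ 2)
      ((volume : Measure (E d)).prod volume) := by
    rwa [← Measure.volume_eq_prod]
  have hψint : Integrable ψ := hyint'.integral_prod_left
  set A : ℝ := ∫ x, ψ x with hA
  have hA0 : 0 ≤ A := integral_nonneg hψnn
  have hae : ∀ᵐ x : E d, Integrable (fun v : E d => maxwellian d v * y (x, v)^2) :=
    hyint'.prod_right_ae
  have hGbound : ∀ᵐ x : E d, ‖G x‖^2 ≤ ψ x := by
    filter_upwards [hae] with x hx
    exact stepC y hym x hx
  -- ENNReal estimates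
  set u : E d → ℝ≥0∞ := fun z => ENNReal.ofReal (U z) with hu
  set W : E d → ℝ≥0∞ := fun x => ENNReal.ofReal ‖G x‖ with hW
  have hu_meas : Measurable u := hUmeas.ennreal_ofReal
  have hWmeas : Measurable W := hGm.norm.ennreal_ofReal
  have huint : ∫⁻ z, u z = 1 := by
    rw [hu]
    rw [← ofReal_integral_eq_lintegral_ofReal hUint (Eventually.of_forall hUnonneg), hUone,
      ENNReal.ofReal_one]
  have hu_translate : ∀ x : E d, ∫⁻ x', u (x - x') = 1 := by
    intro x
    rw [(Measure.measurePreserving_sub_left volume x).lintegral_comp hu_meas]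
    exact huint
  have claim1 : ∀ x : E d, ENNReal.ofReal ‖C x‖ ≤ ∫⁻ x', u (x - x') * W x' := by
    intro x
    by_cases hint : Integrable (fun x' : E d => U (x - x') • G x') volume
    · calc ENNReal.ofReal ‖C x‖
          ≤ ENNReal.ofReal (∫ x', ‖U (x - x') • G x'‖) :=
            ENNReal.ofReal_le_ofReal (norm_integral_le_integral_norm _)
        _ = ∫⁻ x', ENNReal.ofReal ‖U (x - x') • G x'‖ :=
            ofReal_integral_eq_lintegral_ofReal hint.norm
              (Eventually.of_forall fun x' => norm_nonneg _)
        _ = ∫⁻ x', u (x - x') * W x' := by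
            apply lintegral_congr
            intro x'
            rw [norm_smul, Real.norm_of_nonneg (hUnonneg _), ENNReal.ofReal_mul (hUnonneg _)]
    · have : C x = 0 := integral_undef hint
      rw [this]
      simp
  have claim2 : ∀ x : E d,
      (∫⁻ x', u (x - x') * W x') ^ (2:ℝ) ≤ ∫⁻ x', u (x - x') * (W x') ^ (2:ℝ) := by
    intro x
    exact lint_cs volume _ _
      ((hu_meas.comp (measurable_const.sub measurable_id)).aemeasurable)
      hWmeas.aemeasurable (le_of_eq (hu_translate x))
  have key : ∫⁻ x : E d, ENNReal.ofReal (‖C x‖^2) ≤ ENNReal.ofReal A := by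
    calc ∫⁻ x : E d, ENNReal.ofReal (‖C x‖^2)
        = ∫⁻ x : E d, (ENNReal.ofReal ‖C x‖) ^ (2:ℝ) := by
          apply lintegral_congr
          intro x
          exact ofReal_sq _ (norm_nonneg _)
      _ ≤ ∫⁻ x : E d, ∫⁻ x', u (x - x') * (W x') ^ (2:ℝ) := by
          apply lintegral_mono
          intro x
          exact le_trans (ENNReal.rpow_le_rpow (claim1 x) (by norm_num)) (claim2 x)
      _ = ∫⁻ x' : E d, ∫⁻ x, u (x - x') * (W x') ^ (2:ℝ) := by
          apply lintegral_lintegral_swap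
          apply Measurable.aemeasurable
          exact (hu_meas.comp (measurable_fst.sub measurable_snd)).mul
            ((ENNReal.continuous_rpow_const.measurable).comp (hWmeas.comp measurable_snd))
      _ = ∫⁻ x' : E d, (∫⁻ x, u (x - x')) * (W x') ^ (2:ℝ) := by
          apply lintegral_congr
          intro x'
          rw [lintegral_mul_const _ (f := fun x : E d => u (x - x'))
            (hu_meas.comp (measurable_id.sub measurable_const))]
      _ = ∫⁻ x' : E d, (W x') ^ (2:ℝ) := by
          apply lintegral_congr
          intro x'
          rw [lintegral_sub_right_eq_self u x', huint, one_mul]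
      _ = ∫⁻ x' : E d, ENNReal.ofReal (‖G x'‖^2) := by
          apply lintegral_congr
          intro x'
          exact (ofReal_sq _ (norm_nonneg _)).symm
      _ ≤ ∫⁻ x' : E d, ENNReal.ofReal (ψ x') := by
          apply lintegral_mono_ae
          filter_upwards [hGbound] with x' hx'
          exact ENNReal.ofReal_le_ofReal hx'
      _ = ENNReal.ofReal A :=
          (ofReal_integral_eq_lintegral_ofReal hψint (Eventually.of_forall hψnn)).symm
  -- integrability of the D-integrand on the product space
  have hDprod_meas : Measurable (fun p : E d × E d => maxwellian d p.2 * D p ^ 2) :=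
    (maxwellian_measurable.comp measurable_snd).mul (hDm.pow_const 2)
  have hDlint : ∫⁻ p : E d × E d, ENNReal.ofReal (maxwellian d p.2 * D p ^ 2)
      ≤ ENNReal.ofReal A := by
    rw [Measure.volume_eq_prod, lintegral_prod _ (hDprod_meas.ennreal_ofReal.aemeasurable)]
    calc ∫⁻ x, ∫⁻ v, ENNReal.ofReal (maxwellian d v * D (x, v) ^ 2)
        = ∫⁻ x : E d, ENNReal.ofReal (‖C x‖^2) := by
          apply lintegral_congr
          intro x
          rw [← ofReal_integral_eq_lintegral_ofReal (hsliceInt x)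
            (Eventually.of_forall fun v => mul_nonneg (maxwellian_pos v).le (sq_nonneg _))]
          rw [hslice x]
      _ ≤ ENNReal.ofReal A := key
  have hDint : Integrable (fun p : E d × E d => maxwellian d p.2 * D p ^ 2) := by
    constructor
    · exact hDprod_meas.aestronglyMeasurable
    · rw [hasFiniteIntegral_iff_norm]
      calc ∫⁻ p : E d × E d, ENNReal.ofReal ‖maxwellian d p.2 * D p ^ 2‖
          = ∫⁻ p : E d × E d, ENNReal.ofReal (maxwellian d p.2 * D p ^ 2) := by
            apply lintegral_congr
            intro p
            rw [Real.norm_of_nonneg (mul_nonneg (maxwellian_pos p.2).le (sq_nonneg _))]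
        _ ≤ ENNReal.ofReal A := hDlint
        _ < ⊤ := ENNReal.ofReal_lt_top
  refine ⟨⟨hDm, hDint⟩, ?_⟩
  -- the norm inequality
  have hCsq_meas : Measurable (fun x : E d => ‖C x‖^2) := hCm.norm.pow_const 2
  have hCsq_int : Integrable (fun x : E d => ‖C x‖^2) := by
    constructor
    · exact hCsq_meas.aestronglyMeasurable
    · rw [hasFiniteIntegral_iff_norm]
      calc ∫⁻ x : E d, ENNReal.ofReal ‖(‖C x‖^2)‖
          = ∫⁻ x : E d, ENNReal.ofReal (‖C x‖^2) := by
            apply lintegral_congr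
            intro x
            rw [Real.norm_of_nonneg (sq_nonneg _)]
        _ ≤ ENNReal.ofReal A := key
        _ < ⊤ := ENNReal.ofReal_lt_top
  have hval : ∫ x : E d, ‖C x‖^2 ≤ A := by
    have h1 : ENNReal.ofReal (∫ x : E d, ‖C x‖^2) = ∫⁻ x : E d, ENNReal.ofReal (‖C x‖^2) :=
      ofReal_integral_eq_lintegral_ofReal hCsq_int (Eventually.of_forall fun x => sq_nonneg _)
    have h2 : ENNReal.ofReal (∫ x : E d, ‖C x‖^2) ≤ ENNReal.ofReal A := h1 ▸ key
    exact (ENNReal.ofReal_le_ofReal_iff hA0).1 h2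
  unfold Ynorm
  have hbase : ∫ x : E d, ∫ v : E d, maxwellian d v * D (x, v)^2 = ∫ x : E d, ‖C x‖^2 := by
    apply integral_congr_ae
    filter_upwards with x
    exact hslice x
  rw [hbase]
  apply Real.rpow_le_rpow (integral_nonneg fun x => sq_nonneg _) ?_ (by norm_num)
  exact hval
end
end

section
/- Let U ∈ L²(ℝ^d) and y ∈ Y. Then for every x ∈ ℝ^d, ‖∫_{ℝ^d} U(x − x̃) ρ_{μyv}(x̃) dx̃‖_{ℝ^d} ≤ √d · ‖U‖_{L²(ℝ^d)} · ‖y‖_Y; in particular the essential supremum of the Euclidean norm of U * ρ_{μyv} over ℝ^d is at most √d ‖U‖_{L²(ℝ^d)} ‖y‖_Y. -/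
open MeasureTheory
open scoped RealInnerProductSpace

noncomputable section

/-! ### Auxiliary lemmas -/

section Statement4Aux

open Real Set

lemma rpow_two_eq' (t : ℝ) : t ^ (2 : ℝ) = t ^ 2 := by
  rw [show (2 : ℝ) = ((2 : ℕ) : ℝ) by norm_num, Real.rpow_natCast]

lemma ofReal_two' : ENNReal.ofReal (2 : ℝ) = 2 := by
  simp [ENNReal.ofReal_ofNat]

lemma conj22 : Real.HolderConjugate 2 2 := Real.HolderConjugate.two_two

lemma maxwellian_nonneg (d : ℕ) (v : E d) : 0 ≤ maxwellian d v := by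
  unfold maxwellian; positivity

lemma maxwellian_measurable (d : ℕ) : Measurable (maxwellian d) := by
  unfold maxwellian; fun_prop

lemma norm_sq_eq_sum {d : ℕ} (v : E d) : ‖v‖ ^ 2 = ∑ j, v j ^ 2 := by
  rw [EuclideanSpace.norm_eq, Real.sq_sqrt (Finset.sum_nonneg fun j _ => sq_nonneg _)]
  simp [Real.norm_eq_abs, sq_abs]

lemma integral_g0 : ∫ t : ℝ, Real.exp (-(1 / 2) * t ^ 2) = Real.sqrt (2 * π) := by
  rw [integral_gaussian (1 / 2 : ℝ), show π / (1 / 2 : ℝ) = 2 * π by ring]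

lemma integrable_g0 : Integrable (fun t : ℝ => Real.exp (-(1 / 2) * t ^ 2)) :=
  integrable_exp_neg_mul_sq (by norm_num)

lemma integrable_g2 : Integrable (fun t : ℝ => t ^ 2 * Real.exp (-(1 / 2) * t ^ 2)) := by
  have := integrable_rpow_mul_exp_neg_mul_sq (b := 1 / 2) (by norm_num) (s := 2) (by norm_num)
  simpa [rpow_two_eq'] using this

lemma integral_g2 : ∫ t : ℝ, t ^ 2 * Real.exp (-(1 / 2) * t ^ 2) = Real.sqrt (2 * π) := by
  have h1 : ∫ t in Ioi (0 : ℝ), t ^ 2 * Real.exp (-(1 / 2) * t ^ 2)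
      = (1 / 2 : ℝ) ^ (-(2 + 1 : ℝ) / 2) * (1 / 2) * Real.Gamma ((2 + 1) / 2) := by
    have := integral_rpow_mul_exp_neg_mul_rpow (p := 2) (q := 2) (b := 1 / 2)
      (by norm_num) (by norm_num) (by norm_num)
    simpa [rpow_two_eq'] using this
  have h2 : (∫ t : ℝ, t ^ 2 * Real.exp (-(1 / 2) * t ^ 2))
      = 2 * ∫ t in Ioi (0 : ℝ), t ^ 2 * Real.exp (-(1 / 2) * t ^ 2) := by
    rw [← integral_comp_abs (f := fun t : ℝ => t ^ 2 * Real.exp (-(1 / 2) * t ^ 2))]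
    simp [sq_abs]
  have hG : Real.Gamma ((2 + 1) / 2 : ℝ) = Real.sqrt π / 2 := by
    rw [show ((2 + 1) / 2 : ℝ) = 1 / 2 + 1 by norm_num,
      Real.Gamma_add_one (by norm_num), Real.Gamma_one_half_eq]
    ring
  have hpow : (1 / 2 : ℝ) ^ (-(2 + 1 : ℝ) / 2) = 2 * Real.sqrt 2 := by
    have e1 : (1 / 2 : ℝ) ^ (-(2 + 1 : ℝ) / 2) = (2 : ℝ) ^ ((3 : ℝ) / 2) := by
      rw [one_div, Real.inv_rpow (by norm_num),
        show (-(2 + 1 : ℝ) / 2) = -((3 : ℝ) / 2) by norm_num,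
        Real.rpow_neg (by norm_num), inv_inv]
    rw [e1, show ((3 : ℝ) / 2) = 1 + 1 / 2 by norm_num, Real.rpow_add (by norm_num),
      Real.rpow_one, ← Real.sqrt_eq_rpow]
  rw [h2, h1, hG, hpow, Real.sqrt_mul (by norm_num : (0:ℝ) ≤ 2) π]
  ring

lemma maxwellian_moment2 (d : ℕ) (i : Fin d) :
    Integrable (fun v : E d => maxwellian d v * v i ^ 2) ∧
      ∫ v : E d, maxwellian d v * v i ^ 2 = 1 := by
  classical
  set G : Fin d → ℝ → ℝ := fun j t => (if j = i then t ^ 2 else 1) * Real.exp (-(1 / 2) * t ^ 2)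
    with hGdef
  have hGint : ∀ j, Integrable (G j) := by
    intro j
    by_cases h : j = i
    · simpa [hGdef, h] using integrable_g2
    · simpa [hGdef, h] using integrable_g0
  have hGval : ∀ j, ∫ t : ℝ, G j t = Real.sqrt (2 * π) := by
    intro j
    by_cases h : j = i
    · simpa [hGdef, h] using integral_g2
    · simpa [hGdef, h] using integral_g0
  have hpt : ∀ v : E d, maxwellian d v * v i ^ 2
      = (2 * π) ^ (-(d : ℝ) / 2) * ∏ j, G j (v j) := by
    intro v
    have hprod : ∏ j, G j (v j) = v i ^ 2 * Real.exp (-(1 / 2) * ∑ j, v j ^ 2) := by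
      rw [hGdef]
      simp only []
      rw [Finset.prod_mul_distrib]
      congr 1
      · simpa using Finset.prod_ite_eq' Finset.univ i (fun j => v j ^ 2)
      · rw [← Real.exp_sum, ← Finset.mul_sum]
    rw [hprod]
    unfold maxwellian
    rw [norm_sq_eq_sum]
    rw [show -(∑ j, v j ^ 2) / 2 = -(1 / 2) * ∑ j, v j ^ 2 by ring]
    ring
  have hmp := EuclideanSpace.volume_preserving_symm_measurableEquiv_toLp (Fin d)
  have emb := (MeasurableEquiv.toLp 2 (Fin d → ℝ)).symm.measurableEmbedding
  have hPiInt : Integrable (fun w : Fin d → ℝ => ∏ j, G j (w j)) :=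
    Integrable.fintype_prod (f := G) hGint
  have hEInt : Integrable (fun v : E d => ∏ j, G j (v j)) := by
    exact (hmp.integrable_comp_emb emb).mpr hPiInt
  have hEval : ∫ v : E d, ∏ j, G j (v j) = Real.sqrt (2 * π) ^ d := by
    calc ∫ v : E d, ∏ j, G j (v j)
        = ∫ w : Fin d → ℝ, ∏ j, G j (w j) :=
          hmp.integral_comp emb fun w => ∏ j, G j (w j)
      _ = ∏ j, ∫ t : ℝ, G j t := MeasureTheory.integral_fintype_prod_eq_prod (ι := Fin d) G
      _ = Real.sqrt (2 * π) ^ d := by simp [hGval]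
  have hc : (0 : ℝ) < 2 * π := by positivity
  have hcombine : (2 * π) ^ (-(d : ℝ) / 2) * Real.sqrt (2 * π) ^ d = 1 := by
    rw [Real.sqrt_eq_rpow, ← Real.rpow_natCast ((2 * π) ^ (1 / (2:ℝ))) d,
      ← Real.rpow_mul hc.le, ← Real.rpow_add hc,
      show -(d : ℝ) / 2 + 1 / 2 * (d : ℕ) = 0 by push_cast; ring, Real.rpow_zero]
  constructor
  · exact (hEInt.const_mul _).congr (Filter.Eventually.of_forall fun v => (hpt v).symm)
  · rw [show (fun v : E d => maxwellian d v * v i ^ 2)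
        = fun v : E d => (2 * π) ^ (-(d : ℝ) / 2) * ∏ j, G j (v j) from funext hpt,
      MeasureTheory.integral_const_mul, hEval, hcombine]

lemma rho_sq_le (d : ℕ) (y : E d × E d → ℝ) (hmy : Measurable y) (x : E d)
    (h2 : Integrable (fun v : E d => maxwellian d v * y (x, v) ^ 2)) :
    ‖rhoMuV d y x‖ ^ 2 ≤ d * ∫ v : E d, maxwellian d v * y (x, v) ^ 2 := by
  set A := ∫ v : E d, maxwellian d v * y (x, v) ^ 2 with hA
  have hAnn : 0 ≤ A :=
    integral_nonneg fun v => mul_nonneg (maxwellian_nonneg d v) (sq_nonneg _)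
  by_cases h1 : Integrable (fun v : E d => (maxwellian d v * y (x, v)) • v) volume
  swap
  · rw [rhoMuV, integral_undef h1]
    simpa using mul_nonneg (Nat.cast_nonneg d) hAnn
  · -- components of the vector integral
    have hcomp : ∀ i : Fin d, rhoMuV d y x i
        = ∫ v : E d, maxwellian d v * y (x, v) * v i := by
      intro i
      have h := ContinuousLinearMap.integral_comp_comm (EuclideanSpace.proj (𝕜 := ℝ) i) h1
      have h' : (EuclideanSpace.proj (𝕜 := ℝ) i) (rhoMuV d y x) = rhoMuV d y x i := rfl
      rw [← h', rhoMuV, ← h]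
      exact integral_congr_ae (Filter.Eventually.of_forall fun v => by
        simp [smul_eq_mul])
    have hCS : ∀ i : Fin d, rhoMuV d y x i ^ 2 ≤ A := by
      intro i
      set f : E d → ℝ := fun v => Real.sqrt (maxwellian d v) * v i with hf
      set g : E d → ℝ := fun v => Real.sqrt (maxwellian d v) * y (x, v) with hg
      have hfm : Measurable f :=
        ((maxwellian_measurable d).sqrt).mul (EuclideanSpace.proj (𝕜 := ℝ) i).measurable
      have hgm : Measurable g :=
        ((maxwellian_measurable d).sqrt).mul (hmy.comp (measurable_prodMk_left))
      have hfsq : ∀ v : E d, ‖f v‖ ^ 2 = maxwellian d v * v i ^ 2 := fun v => by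
        rw [Real.norm_eq_abs, sq_abs, hf]
        rw [mul_pow, Real.sq_sqrt (maxwellian_nonneg d v)]
      have hgsq : ∀ v : E d, ‖g v‖ ^ 2 = maxwellian d v * y (x, v) ^ 2 := fun v => by
        rw [Real.norm_eq_abs, sq_abs, hg]
        rw [mul_pow, Real.sq_sqrt (maxwellian_nonneg d v)]
      have hfL : MemLp f (ENNReal.ofReal 2) volume := by
        rw [ofReal_two']
        refine (memLp_two_iff_integrable_sq_norm hfm.aestronglyMeasurable).mpr ?_
        exact (maxwellian_moment2 d i).1.congr
          (Filter.Eventually.of_forall fun v => (hfsq v).symm)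
      have hgL : MemLp g (ENNReal.ofReal 2) volume := by
        rw [ofReal_two']
        refine (memLp_two_iff_integrable_sq_norm hgm.aestronglyMeasurable).mpr ?_
        exact h2.congr (Filter.Eventually.of_forall fun v => (hgsq v).symm)
      have hfval : ∫ v : E d, ‖f v‖ ^ (2 : ℝ) = 1 := by
        rw [integral_congr_ae (Filter.Eventually.of_forall fun v => by
          rw [rpow_two_eq', hfsq v])]
        exact (maxwellian_moment2 d i).2
      have hgval : ∫ v : E d, ‖g v‖ ^ (2 : ℝ) = A := by
        rw [integral_congr_ae (Filter.Eventually.of_forall fun v => by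
          rw [rpow_two_eq', hgsq v])]
      have hCSi := MeasureTheory.integral_mul_norm_le_Lp_mul_Lq conj22 hfL hgL
      rw [hfval, hgval, Real.one_rpow, one_mul] at hCSi
      have habs : |rhoMuV d y x i| ≤ A ^ (1 / (2 : ℝ)) := by
        rw [hcomp i]
        calc |∫ v : E d, maxwellian d v * y (x, v) * v i|
            ≤ ∫ v : E d, |maxwellian d v * y (x, v) * v i| := by
              simpa only [Real.norm_eq_abs] using
                norm_integral_le_integral_norm (μ := volume)
                  (fun v : E d => maxwellian d v * y (x, v) * v i)
          _ = ∫ v : E d, ‖f v‖ * ‖g v‖ := by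
              refine integral_congr_ae (Filter.Eventually.of_forall fun v => ?_)
              show |maxwellian d v * y (x, v) * v i| = ‖f v‖ * ‖g v‖
              rw [Real.norm_eq_abs, Real.norm_eq_abs, ← abs_mul]
              congr 1
              have h := Real.mul_self_sqrt (maxwellian_nonneg d v)
              simp only [hf, hg]
              linear_combination (-(y (x, v) * v i)) * h
          _ ≤ A ^ (1 / (2 : ℝ)) := hCSi
      calc rhoMuV d y x i ^ 2 = |rhoMuV d y x i| ^ 2 := (sq_abs _).symm
        _ ≤ (A ^ (1 / (2 : ℝ))) ^ 2 := by
            exact pow_le_pow_left₀ (abs_nonneg _) habs 2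
        _ = A := by
            rw [← Real.rpow_natCast (A ^ (1 / (2 : ℝ))) 2, ← Real.rpow_mul hAnn]
            norm_num
    rw [norm_sq_eq_sum]
    calc ∑ i, rhoMuV d y x i ^ 2 ≤ ∑ _i : Fin d, A :=
          Finset.sum_le_sum fun i _ => hCS i
      _ = d * A := by
          simp [Finset.sum_const, nsmul_eq_mul]

end Statement4Aux

/-- For `U ∈ L²(ℝ^d)` and `y ∈ Y`, the convolution `U * ρ_{μyv}` is
pointwise bounded in Euclidean norm by `√d ‖U‖_{L²} ‖y‖_Y`, hence so is its
essential supremum. -/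
theorem statement4 (d : ℕ) (hd : 1 ≤ d) (U : E d → ℝ)
    (hU : MemLp U 2 (volume : Measure (E d)))
    (y : E d × E d → ℝ) (hy : memY d y) :
    (∀ x : E d, ‖∫ x' : E d, U (x - x') • rhoMuV d y x'‖ ≤
        Real.sqrt d * UL2norm d U * Ynorm d y) ∧
    essSup (fun x : E d => ‖∫ x' : E d, U (x - x') • rhoMuV d y x'‖)
        (volume : Measure (E d)) ≤ Real.sqrt d * UL2norm d U * Ynorm d y := by
  classical
  obtain ⟨hmy, hIy⟩ := hy
  have hmnn : ∀ v : E d, 0 ≤ maxwellian d v := maxwellian_nonneg d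
  set A := ∫ x : E d, ∫ v : E d, maxwellian d v * y (x, v) ^ 2 with hA
  have hAnn : 0 ≤ A :=
    integral_nonneg fun x => integral_nonneg fun v => mul_nonneg (hmnn v) (sq_nonneg _)
  have hIy' : Integrable (fun p : E d × E d => maxwellian d p.2 * y p ^ 2)
      ((volume : Measure (E d)).prod (volume : Measure (E d))) := by
    rwa [← MeasureTheory.Measure.volume_eq_prod]
  have hae : ∀ᵐ x : E d, Integrable (fun v : E d => maxwellian d v * y (x, v) ^ 2) := by
    simpa using hIy'.prod_right_ae
  have hgint : Integrable (fun x : E d => ∫ v : E d, maxwellian d v * y (x, v) ^ 2) := by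
    simpa using hIy'.integral_prod_left
  have hsm : StronglyMeasurable (rhoMuV d y) := by
    have hfm : StronglyMeasurable (fun p : E d × E d => (maxwellian d p.2 * y p) • p.2) :=
      (((maxwellian_measurable d).comp measurable_snd).mul hmy).smul measurable_snd
        |>.stronglyMeasurable
    exact hfm.integral_prod_right'
  have hbd : ∀ᵐ x : E d, ‖rhoMuV d y x‖ ^ 2
      ≤ d * ∫ v : E d, maxwellian d v * y (x, v) ^ 2 :=
    hae.mono fun x hx => rho_sq_le d y hmy x hx
  have hint_sq : Integrable (fun x : E d => ‖rhoMuV d y x‖ ^ 2) := by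
    refine Integrable.mono' (hgint.const_mul d) ?_ ?_
    · exact ((hsm.measurable.norm).pow_const 2).aestronglyMeasurable
    · filter_upwards [hbd] with x hx
      rwa [Real.norm_eq_abs, abs_of_nonneg (pow_nonneg (norm_nonneg _) 2)]
  have hint_le : ∫ x : E d, ‖rhoMuV d y x‖ ^ 2 ≤ d * A := by
    calc ∫ x : E d, ‖rhoMuV d y x‖ ^ 2
        ≤ ∫ x : E d, (d : ℝ) * ∫ v : E d, maxwellian d v * y (x, v) ^ 2 :=
          integral_mono_of_nonneg
            (Filter.Eventually.of_forall fun x => pow_nonneg (norm_nonneg _) 2)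
            (hgint.const_mul d) hbd
      _ = d * A := by rw [MeasureTheory.integral_const_mul]
  have hgmem : MemLp (rhoMuV d y) (ENNReal.ofReal 2) volume := by
    rw [ofReal_two']
    exact (memLp_two_iff_integrable_sq_norm hsm.aestronglyMeasurable).mpr hint_sq
  have hUnn : 0 ≤ UL2norm d U :=
    Real.rpow_nonneg (integral_nonneg fun x => sq_nonneg _) _
  have key : ∀ x : E d, ‖∫ x' : E d, U (x - x') • rhoMuV d y x'‖ ≤
      Real.sqrt d * UL2norm d U * Ynorm d y := by
    intro x
    have hmp : MeasurePreserving (fun x' : E d => x - x') volume volume :=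
      Measure.measurePreserving_sub_left volume x
    have hUx : MemLp (fun x' : E d => U (x - x')) (ENNReal.ofReal 2) volume := by
      rw [ofReal_two']
      have h0 : MemLp U 2 (Measure.map (fun x' : E d => x - x') volume) := by
        rwa [hmp.map_eq]
      exact h0.comp_of_map hmp.measurable.aemeasurable
    have hfirst : ∫ x' : E d, ‖U (x - x')‖ ^ (2 : ℝ) = ∫ x' : E d, U x' ^ 2 := by
      simp_rw [rpow_two_eq', Real.norm_eq_abs, sq_abs]
      exact integral_sub_left_eq_self (fun x' : E d => U x' ^ 2) volume x
    have hsecond : (∫ x' : E d, ‖rhoMuV d y x'‖ ^ (2 : ℝ)) ^ (1 / (2 : ℝ))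
        ≤ Real.sqrt d * Ynorm d y := by
      have hr : ∫ x' : E d, ‖rhoMuV d y x'‖ ^ (2 : ℝ)
          = ∫ x' : E d, ‖rhoMuV d y x'‖ ^ 2 := by
        simp_rw [rpow_two_eq']
      rw [hr]
      have h3 : (0 : ℝ) ≤ ∫ x' : E d, ‖rhoMuV d y x'‖ ^ 2 :=
        integral_nonneg fun x' => pow_nonneg (norm_nonneg _) 2
      calc (∫ x' : E d, ‖rhoMuV d y x'‖ ^ 2) ^ (1 / (2 : ℝ))
          ≤ ((d : ℝ) * A) ^ (1 / (2 : ℝ)) :=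
            Real.rpow_le_rpow h3 hint_le (by norm_num)
        _ = Real.sqrt d * Ynorm d y := by
            rw [Real.mul_rpow (Nat.cast_nonneg d) hAnn, Real.sqrt_eq_rpow]
            rfl
    calc ‖∫ x' : E d, U (x - x') • rhoMuV d y x'‖
        ≤ ∫ x' : E d, ‖U (x - x') • rhoMuV d y x'‖ := norm_integral_le_integral_norm _
      _ = ∫ x' : E d, ‖U (x - x')‖ * ‖rhoMuV d y x'‖ := by
          simp_rw [norm_smul]
      _ ≤ (∫ x' : E d, ‖U (x - x')‖ ^ (2 : ℝ)) ^ (1 / (2 : ℝ))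
            * (∫ x' : E d, ‖rhoMuV d y x'‖ ^ (2 : ℝ)) ^ (1 / (2 : ℝ)) := by
          have h := MeasureTheory.integral_mul_norm_le_Lp_mul_Lq conj22 hUx hgmem.norm
          simpa only [norm_norm] using h
      _ ≤ UL2norm d U * (Real.sqrt d * Ynorm d y) := by
          refine mul_le_mul (le_of_eq ?_) hsecond
            (Real.rpow_nonneg (integral_nonneg fun x' =>
              Real.rpow_nonneg (norm_nonneg _) _) _) hUnn
          rw [hfirst]
          rfl
      _ = Real.sqrt d * UL2norm d U * Ynorm d y := by ring
  refine ⟨key, ?_⟩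
  haveI hne : (MeasureTheory.ae (volume : Measure (E d))).NeBot :=
    ae_neBot.mpr (NeZero.ne _)
  exact Filter.limsup_le_of_le
    (Filter.isCoboundedUnder_le_of_le _ (fun x' => norm_nonneg _))
    (Filter.Eventually.of_forall key)
end
end

section
/- Let U ∈ L²(ℝ^d), let w ∈ Y, and let w̃ : ℝ^d × ℝ^d → ℝ be such that for each x the map v ↦ w̃(x,v) is continuously differentiable and ‖w̃‖_Y and ‖∇_v w̃‖_{Y^d} are finite. Then for every ψ ∈ C_c^∞(ℝ^{2d}), | ∫_{ℝ^d} ∫_{ℝ^d} μ(v) (U * ρ_{μw})(x) ∇_v w̃(x,v) · ∇_v ψ(x,v) dv dx | ≤ ‖U‖_{L²(ℝ^d)} · ‖w‖_Y · ‖∇_v w̃‖_{Y^d} · ‖∇_v ψ‖_{Y^d}. (This is the estimate ‖U*ρ_{μw} R₀ w̃‖_{V_v'} ≤ ‖U‖_{L²} ‖w‖_Y ‖∇_v w̃‖_{Y^d} in weak, tested form.) -/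
open MeasureTheory
open scoped RealInnerProductSpace

noncomputable section

section Helpers

lemma cs_abs {α : Type*} [MeasurableSpace α] {μ : Measure α} {f g : α → ℝ}
    (hf : MemLp f 2 μ) (hg : MemLp g 2 μ) :
    |∫ a, f a * g a ∂μ| ≤ (∫ a, f a ^ 2 ∂μ) ^ ((1:ℝ)/2) * (∫ a, g a ^ 2 ∂μ) ^ ((1:ℝ)/2) := by
  have hpq : Real.HolderConjugate 2 2 := Real.HolderConjugate.two_two
  have h2 : ENNReal.ofReal (2:ℝ) = 2 := by rw [ENNReal.ofReal_ofNat]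
  have hf' : MemLp (fun a => |f a|) (ENNReal.ofReal (2:ℝ)) μ := by rw [h2]; exact hf.abs
  have hg' : MemLp (fun a => |g a|) (ENNReal.ofReal (2:ℝ)) μ := by rw [h2]; exact hg.abs
  have key := MeasureTheory.integral_mul_le_Lp_mul_Lq_of_nonneg hpq
    (Filter.Eventually.of_forall (fun a => abs_nonneg (f a)))
    (Filter.Eventually.of_forall (fun a => abs_nonneg (g a))) hf' hg'
  have habs : |∫ a, f a * g a ∂μ| ≤ ∫ a, |f a| * |g a| ∂μ := by
    calc |∫ a, f a * g a ∂μ| ≤ ∫ a, ‖f a * g a‖ ∂μ := by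
          simpa [Real.norm_eq_abs] using norm_integral_le_integral_norm (fun a => f a * g a)
      _ = ∫ a, |f a| * |g a| ∂μ := by simp [Real.norm_eq_abs, abs_mul]
  refine habs.trans (key.trans_eq ?_)
  have e1 : ∀ (h : α → ℝ), (∫ a, |h a| ^ (2:ℝ) ∂μ) = ∫ a, h a ^ 2 ∂μ := by
    intro h; congr 1; ext a
    rw [show ((2:ℝ)) = ((2:ℕ):ℝ) by norm_num, Real.rpow_natCast, sq_abs]
  rw [e1, e1]

lemma weighted_cs {α : Type*} [MeasurableSpace α] {μ : Measure α} {m f g : α → ℝ}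
    (hm : ∀ a, 0 ≤ m a)
    (hf : Integrable (fun a => m a * f a ^ 2) μ)
    (hg : Integrable (fun a => m a * g a ^ 2) μ) :
    ∫ a, m a * (|f a| * |g a|) ∂μ ≤
      Real.sqrt (∫ a, m a * f a ^ 2 ∂μ) * Real.sqrt (∫ a, m a * g a ^ 2 ∂μ) := by
  set f' := fun a => Real.sqrt (m a * f a ^ 2) with hf'def
  set g' := fun a => Real.sqrt (m a * g a ^ 2) with hg'def
  have hsqf : ∀ a, f' a ^ 2 = m a * f a ^ 2 := fun a =>
    Real.sq_sqrt (mul_nonneg (hm a) (sq_nonneg _))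
  have hsqg : ∀ a, g' a ^ 2 = m a * g a ^ 2 := fun a =>
    Real.sq_sqrt (mul_nonneg (hm a) (sq_nonneg _))
  have hf'm : MemLp f' 2 μ := by
    rw [memLp_two_iff_integrable_sq (Real.continuous_sqrt.comp_aestronglyMeasurable hf.1)]
    exact hf.congr (Filter.Eventually.of_forall fun a => (hsqf a).symm)
  have hg'm : MemLp g' 2 μ := by
    rw [memLp_two_iff_integrable_sq (Real.continuous_sqrt.comp_aestronglyMeasurable hg.1)]
    exact hg.congr (Filter.Eventually.of_forall fun a => (hsqg a).symm)
  have key := cs_abs hf'm hg'm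
  have heq : ∀ a, f' a * g' a = m a * (|f a| * |g a|) := by
    intro a
    rw [hf'def, hg'def]
    simp only
    rw [← Real.sqrt_mul (mul_nonneg (hm a) (sq_nonneg _)),
      show m a * f a ^ 2 * (m a * g a ^ 2) = (m a * (|f a| * |g a|)) ^ 2 by
        rw [mul_pow, mul_pow, sq_abs, sq_abs]; ring,
      Real.sqrt_sq (mul_nonneg (hm a) (mul_nonneg (abs_nonneg _) (abs_nonneg _)))]
  calc ∫ a, m a * (|f a| * |g a|) ∂μ = ∫ a, f' a * g' a ∂μ := by
        simp_rw [heq]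
    _ ≤ |∫ a, f' a * g' a ∂μ| := le_abs_self _
    _ ≤ (∫ a, f' a ^ 2 ∂μ) ^ ((1:ℝ)/2) * (∫ a, g' a ^ 2 ∂μ) ^ ((1:ℝ)/2) := key
    _ = Real.sqrt (∫ a, m a * f a ^ 2 ∂μ) * Real.sqrt (∫ a, m a * g a ^ 2 ∂μ) := by
        simp_rw [hsqf, hsqg, Real.sqrt_eq_rpow]

lemma maxwellian_pos (d : ℕ) (v : E d) : 0 < maxwellian d v := by
  unfold maxwellian
  have : (0:ℝ) < 2 * Real.pi := by positivity
  positivity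

lemma maxwellian_continuous (d : ℕ) : Continuous (maxwellian d) := by
  unfold maxwellian
  fun_prop

lemma rexp_gauss_integrable (d : ℕ) :
    Integrable (fun v : E d => Real.exp (-‖v‖ ^ 2 / 2)) := by
  have h := (GaussianFourier.integrable_cexp_neg_mul_sq_norm_add
    (b := (1/2 : ℂ)) (by norm_num) 0 (0 : E d)).norm
  refine h.congr (Filter.Eventually.of_forall fun v => ?_)
  simp only [Complex.norm_exp]
  norm_num
  rw [← Complex.ofReal_pow, Complex.ofReal_re]
  ring

lemma maxwellian_integrable (d : ℕ) : Integrable (maxwellian d) :=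
  (rexp_gauss_integrable d).const_mul _

lemma maxwellian_integral (d : ℕ) : ∫ v : E d, maxwellian d v = 1 := by
  unfold maxwellian
  rw [integral_const_mul]
  have : ∀ v : E d, Real.exp (-‖v‖^2/2) = Real.exp (-(1/2) * ‖v‖^2) := by
    intro v; congr 1; ring
  simp_rw [this]
  rw [GaussianFourier.integral_rexp_neg_mul_sq_norm (by norm_num : (0:ℝ) < 1/2)]
  have hfr : (Module.finrank ℝ (E d) : ℝ) = d := by simp
  rw [hfr, show Real.pi / (1/2) = 2 * Real.pi by ring,
    ← Real.rpow_add (by positivity), show (-(d:ℝ)/2 + (d:ℝ)/2) = 0 by ring, Real.rpow_zero]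

lemma iter_eq_joint {d : ℕ} {f : E d × E d → ℝ} (hf : Integrable f) :
    ∫ x : E d, ∫ v : E d, f (x, v) = ∫ p : E d × E d, f p := by
  rw [MeasureTheory.Measure.volume_eq_prod] at hf ⊢
  exact (MeasureTheory.integral_prod f hf).symm

end Helpers

/-- Tested form of `‖U*ρ_{μw} R₀ w̃‖_{V_v'} ≤ ‖U‖_{L²} ‖w‖_Y ‖∇_v w̃‖_{Y^d}`. -/
theorem statement10 (d : ℕ) (hd : 1 ≤ d) (U : E d → ℝ)
    (hU : MemLp U 2 (volume : Measure (E d)))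
    (w : E d × E d → ℝ) (hw : memY d w)
    (wt : E d × E d → ℝ)
    (hwt : ∀ x : E d, ContDiff ℝ 1 (fun v => wt (x, v)))
    (hwtY : Integrable (fun p : E d × E d => maxwellian d p.2 * wt p ^ 2))
    (hwtG : Integrable (fun p : E d × E d => maxwellian d p.2 * ‖gradV d wt p‖ ^ 2))
    (ψ : E d × E d → ℝ) (hψ : ContDiff ℝ (⊤ : ℕ∞) ψ) (hψc : HasCompactSupport ψ) :
    |∫ x : E d, ∫ v : E d, maxwellian d v *
        ((∫ x' : E d, U (x - x') * rhoMu d w x') *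
          ⟪gradV d wt (x, v), gradV d ψ (x, v)⟫)| ≤
      UL2norm d U * Ynorm d w * YdNorm d (gradV d wt) * YdNorm d (gradV d ψ) := by
  classical
  have hm_nonneg : ∀ v : E d, 0 ≤ maxwellian d v := fun v => (maxwellian_pos d v).le
  set a := gradV d wt with hadef
  set b := gradV d ψ with hbdef
  set ρ := rhoMu d w with hrdef
  -- b is continuous with compact support;   joint integrability for ψ
  have hψ1 : ContDiff ℝ 1 ψ := hψ.of_le (by simp)
  set L : E d →L[ℝ] (E d) × (E d) :=
    (0 : E d →L[ℝ] E d).prod (ContinuousLinearMap.id ℝ (E d)) with hLdef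
  have hb_eq : ∀ p : E d × E d, b p =
      (InnerProductSpace.toDual ℝ (E d)).symm ((fderiv ℝ ψ p).comp L) := by
    intro p
    have h1 : HasFDerivAt (fun w : E d => (p.1, w)) L p.2 :=
      HasFDerivAt.prodMk (hasFDerivAt_const p.1 p.2) (hasFDerivAt_id p.2)
    have h2 : HasFDerivAt (fun w : E d => ψ (p.1, w)) ((fderiv ℝ ψ p).comp L) p.2 :=
      (((hψ1.differentiable one_ne_zero) p).hasFDerivAt).comp p.2 h1
    rw [hbdef]
    unfold gradV gradient
    rw [h2.fderiv]
  have hb_cont : Continuous b := by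
    have h1 : Continuous (fun p : E d × E d => (fderiv ℝ ψ p).comp L) :=
      (hψ.continuous_fderiv (by simp)).clm_comp continuous_const
    have : Continuous (fun p : E d × E d =>
        (InnerProductSpace.toDual ℝ (E d)).symm ((fderiv ℝ ψ p).comp L)) :=
      (InnerProductSpace.toDual ℝ (E d)).symm.continuous.comp h1
    exact this.congr (fun p => (hb_eq p).symm)
  have hb_zero : ∀ p : E d × E d, p ∉ tsupport ψ → b p = 0 := by
    intro p hp
    have hopen : IsOpen ((tsupport ψ)ᶜ) := (isClosed_tsupport ψ).isOpen_compl
    have hev : (fun w : E d => ψ (p.1, w)) =ᶠ[nhds p.2] (fun _ => (0:ℝ)) := by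
      have hmem : (tsupport ψ)ᶜ ∈ nhds p := hopen.mem_nhds hp
      have hmem2 : (fun w : E d => (p.1, w)) ⁻¹' ((tsupport ψ)ᶜ) ∈ nhds p.2 := by
        exact (Continuous.prodMk continuous_const continuous_id).continuousAt.preimage_mem_nhds
          (by simpa using hmem)
      filter_upwards [hmem2] with w hw
      exact image_eq_zero_of_notMem_tsupport hw
    have : fderiv ℝ (fun w : E d => ψ (p.1, w)) p.2 = fderiv ℝ (fun _ : E d => (0:ℝ)) p.2 :=
      Filter.EventuallyEq.fderiv_eq hev
    rw [hbdef]
    unfold gradV gradient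
    rw [this, fderiv_fun_const]
    simp
  have hψG : Integrable (fun p : E d × E d => maxwellian d p.2 * ‖b p‖ ^ 2) := by
    apply Continuous.integrable_of_hasCompactSupport
    · exact ((maxwellian_continuous d).comp continuous_snd).mul (hb_cont.norm.pow 2)
    · apply HasCompactSupport.intro hψc
      intro p hp
      rw [hb_zero p hp]
      simp
  -- joint integrability of m * (‖a‖ * ‖b‖)
  have hsma : AEStronglyMeasurable
      (fun p : E d × E d => Real.sqrt (maxwellian d p.2 * ‖a p‖ ^ 2)) volume :=
    Real.continuous_sqrt.comp_aestronglyMeasurable hwtG.1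
  have hsmb : AEStronglyMeasurable
      (fun p : E d × E d => Real.sqrt (maxwellian d p.2 * ‖b p‖ ^ 2)) volume :=
    Real.continuous_sqrt.comp_aestronglyMeasurable hψG.1
  have hprod_eq : ∀ p : E d × E d,
      Real.sqrt (maxwellian d p.2 * ‖a p‖ ^ 2) * Real.sqrt (maxwellian d p.2 * ‖b p‖ ^ 2)
        = maxwellian d p.2 * (‖a p‖ * ‖b p‖) := by
    intro p
    rw [← Real.sqrt_mul (mul_nonneg (hm_nonneg p.2) (sq_nonneg _)),
      show maxwellian d p.2 * ‖a p‖ ^ 2 * (maxwellian d p.2 * ‖b p‖ ^ 2)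
          = (maxwellian d p.2 * (‖a p‖ * ‖b p‖)) ^ 2 by ring,
      Real.sqrt_sq (mul_nonneg (hm_nonneg p.2) (mul_nonneg (norm_nonneg _) (norm_nonneg _)))]
  have hab_int : Integrable (fun p : E d × E d => maxwellian d p.2 * (‖a p‖ * ‖b p‖)) := by
    refine Integrable.mono' ((hwtG.add hψG).div_const 2) ?_ ?_
    · refine ((hsma.mul hsmb).congr (Filter.Eventually.of_forall fun p => hprod_eq p))
    · refine Filter.Eventually.of_forall fun p => ?_
      rw [Real.norm_eq_abs,
        abs_of_nonneg (mul_nonneg (hm_nonneg p.2) (mul_nonneg (norm_nonneg _) (norm_nonneg _)))]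
      rw [← hprod_eq p]
      have h2 := two_mul_le_add_sq (Real.sqrt (maxwellian d p.2 * ‖a p‖ ^ 2))
        (Real.sqrt (maxwellian d p.2 * ‖b p‖ ^ 2))
      rw [Real.sq_sqrt (mul_nonneg (hm_nonneg p.2) (sq_nonneg _)),
        Real.sq_sqrt (mul_nonneg (hm_nonneg p.2) (sq_nonneg _))] at h2
      simp only [Pi.add_apply]
      linarith
  -- ρ : measurability, L² bound
  have hFmeas : Measurable (fun p : E d × E d => maxwellian d p.2 * w p) :=
    ((maxwellian_continuous d).measurable.comp measurable_snd).mul hw.1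
  have hρ_sm : StronglyMeasurable ρ :=
    MeasureTheory.StronglyMeasurable.integral_prod_right' (ν := (volume : Measure (E d)))
      hFmeas.stronglyMeasurable
  have hw2 : Integrable (fun p : E d × E d => maxwellian d p.2 * w p ^ 2)
      ((volume : Measure (E d)).prod (volume : Measure (E d))) := by
    rw [← MeasureTheory.Measure.volume_eq_prod]; exact hw.2
  have h_int : Integrable (fun x : E d => ∫ v : E d, maxwellian d v * w (x, v) ^ 2) :=
    hw2.integral_prod_left
  have h_nonneg : ∀ x : E d, 0 ≤ ∫ v : E d, maxwellian d v * w (x, v) ^ 2 := fun x =>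
    integral_nonneg fun v => mul_nonneg (hm_nonneg v) (sq_nonneg _)
  have hsec : ∀ᵐ x : E d, Integrable (fun v : E d => maxwellian d v * w (x, v) ^ 2) :=
    hw2.prod_right_ae
  have hρ_bound : ∀ᵐ x : E d, ρ x ^ 2 ≤ ∫ v : E d, maxwellian d v * w (x, v) ^ 2 := by
    filter_upwards [hsec] with x hx
    have hwx_meas : Measurable (fun v : E d => w (x, v)) := hw.1.comp measurable_prodMk_left
    have hm1 : Integrable (fun v : E d => maxwellian d v * (1:ℝ) ^ 2) := by
      simpa using maxwellian_integrable d
    have hwcs := weighted_cs (f := fun _ : E d => (1:ℝ)) (g := fun v => w (x, v))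
      hm_nonneg hm1 hx
    have h1 : (∫ v : E d, maxwellian d v * (1:ℝ) ^ 2) = 1 := by
      simpa using maxwellian_integral d
    rw [h1, Real.sqrt_one, one_mul] at hwcs
    have habs : |ρ x| ≤ ∫ v : E d, maxwellian d v * (|(1:ℝ)| * |w (x, v)|) := by
      have hn : |ρ x| ≤ ∫ v : E d, ‖maxwellian d v * w (x, v)‖ := by
        simpa [Real.norm_eq_abs, hrdef, rhoMu] using
          norm_integral_le_integral_norm (fun v : E d => maxwellian d v * w (x, v))
      refine hn.trans_eq ?_
      congr 1; ext v
      rw [Real.norm_eq_abs, abs_mul, abs_of_nonneg (hm_nonneg v), abs_one, one_mul]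
    have hfin : |ρ x| ≤ Real.sqrt (∫ v : E d, maxwellian d v * w (x, v) ^ 2) :=
      habs.trans hwcs
    calc ρ x ^ 2 = |ρ x| ^ 2 := (sq_abs _).symm
      _ ≤ Real.sqrt (∫ v : E d, maxwellian d v * w (x, v) ^ 2) ^ 2 :=
          pow_le_pow_left₀ (abs_nonneg _) hfin 2
      _ = ∫ v : E d, maxwellian d v * w (x, v) ^ 2 := Real.sq_sqrt (h_nonneg x)
  have hρ2_int : Integrable (fun x : E d => ρ x ^ 2) := by
    refine Integrable.mono' h_int ((hρ_sm.pow 2).aestronglyMeasurable) ?_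
    filter_upwards [hρ_bound] with x hx
    rw [Real.norm_eq_abs, abs_of_nonneg (sq_nonneg _)]
    exact hx
  have hρ_mem : MemLp ρ 2 (volume : Measure (E d)) :=
    (memLp_two_iff_integrable_sq hρ_sm.aestronglyMeasurable).2 hρ2_int
  have hρ2_le : ∫ x : E d, ρ x ^ 2 ≤ ∫ x : E d, ∫ v : E d, maxwellian d v * w (x, v) ^ 2 :=
    integral_mono_ae hρ2_int h_int hρ_bound
  -- the convolution bound
  set K := UL2norm d U * Ynorm d w with hKdef
  have hYnn : 0 ≤ Ynorm d w := Real.rpow_nonneg (integral_nonneg fun x => h_nonneg x) _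
  have hUnn : 0 ≤ UL2norm d U := Real.rpow_nonneg (integral_nonneg fun x => sq_nonneg _) _
  have hKnn : 0 ≤ K := mul_nonneg hUnn hYnn
  have hc : ∀ x : E d, |∫ x' : E d, U (x - x') * ρ x'| ≤ K := by
    intro x
    have hUx : MemLp (fun x' : E d => U (x - x')) 2 (volume : Measure (E d)) :=
      hU.comp_measurePreserving (Measure.measurePreserving_sub_left volume x)
    have key := cs_abs hUx hρ_mem
    have e1 : (∫ x' : E d, U (x - x') ^ 2) = ∫ t : E d, U t ^ 2 :=
      integral_sub_left_eq_self (fun t => U t ^ 2) volume x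
    rw [e1] at key
    refine key.trans ?_
    rw [hKdef]
    unfold UL2norm Ynorm
    refine mul_le_mul_of_nonneg_left ?_ (Real.rpow_nonneg (integral_nonneg fun t => sq_nonneg _) _)
    exact Real.rpow_le_rpow (integral_nonneg fun t => sq_nonneg _) hρ2_le (by norm_num)
  -- inner integral rewrite
  set G := fun x : E d => ∫ v : E d, maxwellian d v * ⟪a (x, v), b (x, v)⟫ with hGdef
  set H := fun x : E d => ∫ v : E d, maxwellian d v * (‖a (x, v)‖ * ‖b (x, v)‖) with hHdef
  have hab_int' : Integrable (fun p : E d × E d => maxwellian d p.2 * (‖a p‖ * ‖b p‖))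
      ((volume : Measure (E d)).prod volume) := by
    rw [← MeasureTheory.Measure.volume_eq_prod]; exact hab_int
  have hH_int : Integrable H := hab_int'.integral_prod_left
  have hH_nonneg : ∀ x, 0 ≤ H x := fun x =>
    integral_nonneg fun v => mul_nonneg (hm_nonneg v) (mul_nonneg (norm_nonneg _) (norm_nonneg _))
  have hG_bound : ∀ᵐ x : E d, |G x| ≤ H x := by
    filter_upwards [hab_int'.prod_right_ae] with x hx
    have hn : |G x| ≤ ∫ v : E d, ‖maxwellian d v * ⟪a (x, v), b (x, v)⟫‖ := by
      simpa [Real.norm_eq_abs] using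
        norm_integral_le_integral_norm (fun v : E d => maxwellian d v * ⟪a (x, v), b (x, v)⟫)
    refine hn.trans (integral_mono_of_nonneg
      (Filter.Eventually.of_forall fun v => norm_nonneg _) hx
      (Filter.Eventually.of_forall fun v => ?_))
    simp only [Real.norm_eq_abs, abs_mul, abs_of_nonneg (hm_nonneg v)]
    exact mul_le_mul_of_nonneg_left (abs_real_inner_le_norm _ _) (hm_nonneg v)
  -- rewrite LHS
  have hLHS : (fun x : E d => ∫ v : E d, maxwellian d v *
      ((∫ x' : E d, U (x - x') * rhoMu d w x') * ⟪gradV d wt (x, v), gradV d ψ (x, v)⟫))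
      = fun x : E d => (∫ x' : E d, U (x - x') * ρ x') * G x := by
    ext x
    rw [hGdef]
    simp only
    rw [← integral_const_mul]
    congr 1; ext v; ring
  rw [hLHS]
  -- main estimate
  have step1 : |∫ x : E d, (∫ x' : E d, U (x - x') * ρ x') * G x| ≤ ∫ x : E d, K * H x := by
    have hn : |∫ x : E d, (∫ x' : E d, U (x - x') * ρ x') * G x| ≤
        ∫ x : E d, ‖(∫ x' : E d, U (x - x') * ρ x') * G x‖ := by
      simpa [Real.norm_eq_abs] using
        norm_integral_le_integral_norm (fun x : E d => (∫ x' : E d, U (x - x') * ρ x') * G x)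
    refine hn.trans (integral_mono_of_nonneg
      (Filter.Eventually.of_forall fun x => norm_nonneg _) (hH_int.const_mul K) ?_)
    filter_upwards [hG_bound] with x hx
    simp only [Real.norm_eq_abs, abs_mul]
    exact mul_le_mul (hc x) hx (abs_nonneg _) hKnn
  have step2 : ∫ x : E d, K * H x = K * ∫ x : E d, H x := integral_const_mul K _
  have step3 : ∫ x : E d, H x ≤ YdNorm d a * YdNorm d b := by
    have hiter : ∫ x : E d, H x = ∫ p : E d × E d, maxwellian d p.2 * (‖a p‖ * ‖b p‖) :=
      iter_eq_joint hab_int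
    have hwcs := weighted_cs (μ := (volume : Measure (E d × E d)))
      (m := fun p : E d × E d => maxwellian d p.2)
      (f := fun p => ‖a p‖) (g := fun p => ‖b p‖)
      (fun p => hm_nonneg p.2) hwtG hψG
    simp only [abs_norm] at hwcs
    have ea : Real.sqrt (∫ p : E d × E d, maxwellian d p.2 * ‖a p‖ ^ 2) = YdNorm d a := by
      unfold YdNorm
      rw [← iter_eq_joint hwtG, Real.sqrt_eq_rpow]
    have eb : Real.sqrt (∫ p : E d × E d, maxwellian d p.2 * ‖b p‖ ^ 2) = YdNorm d b := by
      unfold YdNorm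
      rw [← iter_eq_joint hψG, Real.sqrt_eq_rpow]
    rw [hiter]
    rw [ea, eb] at hwcs
    exact hwcs
  have hYdnn : 0 ≤ YdNorm d a := Real.rpow_nonneg (integral_nonneg fun x =>
    integral_nonneg fun v => mul_nonneg (hm_nonneg v) (sq_nonneg _)) _
  calc |∫ x : E d, (∫ x' : E d, U (x - x') * ρ x') * G x|
      ≤ ∫ x : E d, K * H x := step1
    _ = K * ∫ x : E d, H x := step2
    _ ≤ K * (YdNorm d a * YdNorm d b) := mul_le_mul_of_nonneg_left step3 hKnn
    _ = UL2norm d U * Ynorm d w * YdNorm d a * YdNorm d b := by rw [hKdef]; ring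
end
end

section
/- Let z : ℝ^d × ℝ^d → ℝ be such that for each x the map v ↦ z(x,v) is continuously differentiable and ‖z‖_Y is finite. Then for every i ∈ {1,…,d} and every ψ ∈ C_c^∞(ℝ^{2d}), | ∫_{ℝ^d} ∫_{ℝ^d} ∂_{v_i}( μ(v) z(x,v) ) ψ(x,v) dv dx | = | ∫_{ℝ^d} ∫_{ℝ^d} μ(v) z(x,v) ∂_{v_i} ψ(x,v) dv dx | ≤ ‖z‖_Y · ‖∇_v ψ‖_{Y^d}. (This expresses that the i-th component of the operator S z = ∇_v z − z v is bounded from Y to V_v' with norm at most 1.) -/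
open MeasureTheory
open scoped RealInnerProductSpace

noncomputable section

namespace Statement15Aux

lemma maxwellian_contDiff (d : ℕ) : ContDiff ℝ (⊤ : ℕ∞) (maxwellian d) := by
  unfold maxwellian
  exact contDiff_const.mul (Real.contDiff_exp.comp ((contDiff_norm_sq ℝ).neg.div_const 2))

lemma maxwellian_pos {d : ℕ} (v : E d) : 0 < maxwellian d v :=
  mul_pos (Real.rpow_pos_of_pos (by positivity) _) (Real.exp_pos _)

lemma slice_fderiv {d : ℕ} {ψ : E d × E d → ℝ} (hψ : ContDiff ℝ (⊤ : ℕ∞) ψ) (x v : E d) :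
    fderiv ℝ (fun w => ψ (x, w)) v
      = (fderiv ℝ ψ (x, v)).comp (ContinuousLinearMap.inr ℝ (E d) (E d)) :=
  ((hψ.differentiable (by simp) (x, v)).hasFDerivAt.comp v (hasFDerivAt_prodMk_right x v)).fderiv

lemma closedEmb {d : ℕ} (x : E d) : Topology.IsClosedEmbedding (fun v : E d => (x, v)) := by
  apply Isometry.isClosedEmbedding
  intro a b
  simp [Prod.edist_eq]

lemma ibp_slice (d : ℕ) (z : E d × E d → ℝ)
    (hz : ∀ x : E d, ContDiff ℝ 1 (fun v => z (x, v)))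
    (i : Fin d)
    (ψ : E d × E d → ℝ) (hψ : ContDiff ℝ (⊤ : ℕ∞) ψ) (hψc : HasCompactSupport ψ) (x : E d) :
    (∫ v : E d, fderiv ℝ (fun w => maxwellian d w * z (x, w)) v (EuclideanSpace.single i 1) *
        ψ (x, v)) =
      -∫ v : E d, maxwellian d v * z (x, v) *
        fderiv ℝ (fun w => ψ (x, w)) v (EuclideanSpace.single i 1) := by
  set e : E d := EuclideanSpace.single i 1 with he
  have hμsm : ContDiff ℝ (⊤ : ℕ∞) (maxwellian d) := maxwellian_contDiff d
  have hembx := closedEmb x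
  have hfC : ContDiff ℝ 1 fun v => maxwellian d v * z (x, v) := (hμsm.of_le (by simp)).mul (hz x)
  have hgC : ContDiff ℝ (⊤ : ℕ∞) fun v => ψ (x, v) := hψ.comp (contDiff_const.prodMk contDiff_id)
  have hgcs : HasCompactSupport fun v => ψ (x, v) := hψc.comp_isClosedEmbedding hembx
  have hf'c : Continuous fun v => fderiv ℝ (fun w => maxwellian d w * z (x, w)) v e :=
    (hfC.continuous_fderiv (by simp)).clm_apply continuous_const
  have hg'cs : HasCompactSupport fun v => fderiv ℝ (fun w => ψ (x, w)) v e :=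
    hgcs.fderiv_apply ℝ e
  have hg'c : Continuous fun v => fderiv ℝ (fun w => ψ (x, w)) v e :=
    (hgC.continuous_fderiv (by simp)).clm_apply continuous_const
  have t1 : Integrable (fun v => fderiv ℝ (fun w => maxwellian d w * z (x, w)) v e * ψ (x, v)) :=
    (hf'c.mul hgC.continuous).integrable_of_hasCompactSupport hgcs.mul_left
  have t2 : Integrable (fun v => (maxwellian d v * z (x, v)) * fderiv ℝ (fun w => ψ (x, w)) v e) :=
    (hfC.continuous.mul hg'c).integrable_of_hasCompactSupport hg'cs.mul_left
  have t3 : Integrable (fun v => (maxwellian d v * z (x, v)) * ψ (x, v)) :=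
    (hfC.continuous.mul hgC.continuous).integrable_of_hasCompactSupport hgcs.mul_left
  have ibp := integral_mul_fderiv_eq_neg_fderiv_mul_of_integrable t1 t2 t3
    (fun y _ => hfC.differentiable (by simp) y) (fun y _ => hgC.differentiable (by simp) y)
  linarith [ibp]

lemma innerCS (d : ℕ) (z : E d × E d → ℝ)
    (hz : ∀ x : E d, ContDiff ℝ 1 (fun v => z (x, v)))
    (i : Fin d)
    (ψ : E d × E d → ℝ) (hψ : ContDiff ℝ (⊤ : ℕ∞) ψ) (hψc : HasCompactSupport ψ) (x : E d)
    (hAx : Integrable (fun v : E d => maxwellian d v * z (x, v) ^ 2)) :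
    |∫ v : E d, maxwellian d v * z (x, v) *
        fderiv ℝ ψ (x, v) ((0 : E d), EuclideanSpace.single i 1)| ≤
      Real.sqrt (∫ v : E d, maxwellian d v * z (x, v) ^ 2) *
      Real.sqrt (∫ v : E d,
        maxwellian d v * fderiv ℝ ψ (x, v) ((0 : E d), EuclideanSpace.single i 1) ^ 2) := by
  set e : E d := EuclideanSpace.single i 1 with he
  have hμc : Continuous (maxwellian d) := (maxwellian_contDiff d).continuous
  have hμ0 : ∀ v : E d, 0 ≤ maxwellian d v := fun v => (maxwellian_pos v).le
  have hembx := closedEmb x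
  have hfdc : Continuous (fderiv ℝ ψ) := hψ.continuous_fderiv (by simp)
  have hDs : HasCompactSupport fun p : E d × E d => fderiv ℝ ψ p ((0 : E d), e) :=
    hψc.fderiv_apply ℝ ((0 : E d), e)
  have hDxc : Continuous fun v => fderiv ℝ ψ (x, v) ((0 : E d), e) :=
    ((hfdc.comp (continuous_const.prodMk continuous_id)).clm_apply continuous_const)
  have hDxcs : HasCompactSupport fun v => fderiv ℝ ψ (x, v) ((0 : E d), e) :=
    hDs.comp_isClosedEmbedding hembx
  set fv : E d → ℝ := fun v => Real.sqrt (maxwellian d v) * |z (x, v)| with hfv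
  set gv : E d → ℝ := fun v => Real.sqrt (maxwellian d v) * |fderiv ℝ ψ (x, v) ((0 : E d), e)|
    with hgv
  have hfvc : Continuous fv := (Real.continuous_sqrt.comp hμc).mul (hz x).continuous.abs
  have hgvc : Continuous gv := (Real.continuous_sqrt.comp hμc).mul hDxc.abs
  have hfv2 : ∀ v, fv v ^ 2 = maxwellian d v * z (x, v) ^ 2 := fun v => by
    rw [hfv, mul_pow, Real.sq_sqrt (hμ0 v), sq_abs]
  have hgv2 : ∀ v, gv v ^ 2 = maxwellian d v * fderiv ℝ ψ (x, v) ((0 : E d), e) ^ 2 := fun v => by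
    rw [hgv, mul_pow, Real.sq_sqrt (hμ0 v), sq_abs]
  have hfv2i : Integrable (fun v => fv v ^ 2) :=
    hAx.congr (Filter.Eventually.of_forall fun v => (hfv2 v).symm)
  have hgv2i : Integrable (fun v => gv v ^ 2) := by
    have : Integrable (fun v => maxwellian d v * fderiv ℝ ψ (x, v) ((0 : E d), e) ^ 2) := by
      apply Continuous.integrable_of_hasCompactSupport
      · exact hμc.mul (hDxc.pow 2)
      · exact (hDxcs.comp_left (g := fun t : ℝ => t ^ 2) (by simp)).mul_left
    exact this.congr (Filter.Eventually.of_forall fun v => (hgv2 v).symm)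
  have hfvL2 : MemLp fv (ENNReal.ofReal 2) := by
    rw [show ENNReal.ofReal 2 = 2 by norm_num]
    exact (memLp_two_iff_integrable_sq hfvc.aestronglyMeasurable).2 hfv2i
  have hgvL2 : MemLp gv (ENNReal.ofReal 2) := by
    rw [show ENNReal.ofReal 2 = 2 by norm_num]
    exact (memLp_two_iff_integrable_sq hgvc.aestronglyMeasurable).2 hgv2i
  have h22 : Real.HolderConjugate 2 2 := Real.HolderConjugate.two_two
  have key := integral_mul_le_Lp_mul_Lq_of_nonneg h22
    (Filter.Eventually.of_forall fun v => mul_nonneg (Real.sqrt_nonneg _) (abs_nonneg _))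
    (Filter.Eventually.of_forall fun v => mul_nonneg (Real.sqrt_nonneg _) (abs_nonneg _))
    hfvL2 hgvL2
  calc |∫ v : E d, maxwellian d v * z (x, v) * fderiv ℝ ψ (x, v) ((0 : E d), e)|
      = ‖∫ v : E d, maxwellian d v * z (x, v) * fderiv ℝ ψ (x, v) ((0 : E d), e)‖ :=
        (Real.norm_eq_abs _).symm
    _ ≤ ∫ v : E d, ‖maxwellian d v * z (x, v) * fderiv ℝ ψ (x, v) ((0 : E d), e)‖ :=
        norm_integral_le_integral_norm _
    _ = ∫ v : E d, fv v * gv v := by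
        congr 1; funext v
        rw [Real.norm_eq_abs, abs_mul, abs_mul, abs_of_nonneg (hμ0 v), hfv, hgv]
        conv_lhs => rw [← Real.mul_self_sqrt (hμ0 v)]
        ring
    _ ≤ (∫ v : E d, fv v ^ (2:ℝ)) ^ (1/(2:ℝ)) * (∫ v : E d, gv v ^ (2:ℝ)) ^ (1/(2:ℝ)) := key
    _ = _ := by
        have e1 : (∫ v : E d, fv v ^ (2:ℝ)) = ∫ v : E d, maxwellian d v * z (x, v) ^ 2 := by
          congr 1; funext v
          rw [show ((2:ℝ)) = ((2:ℕ):ℝ) by norm_num, Real.rpow_natCast, hfv2 v]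
        have e2 : (∫ v : E d, gv v ^ (2:ℝ)) =
            ∫ v : E d, maxwellian d v * fderiv ℝ ψ (x, v) ((0 : E d), e) ^ 2 := by
          congr 1; funext v
          rw [show ((2:ℝ)) = ((2:ℕ):ℝ) by norm_num, Real.rpow_natCast, hgv2 v]
        rw [e1, e2, Real.sqrt_eq_rpow, Real.sqrt_eq_rpow]

lemma outerCS (d : ℕ) (z : E d × E d → ℝ)
    (hz : ∀ x : E d, ContDiff ℝ 1 (fun v => z (x, v)))
    (hzY : Integrable (fun p : E d × E d => maxwellian d p.2 * z p ^ 2))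
    (i : Fin d)
    (ψ : E d × E d → ℝ) (hψ : ContDiff ℝ (⊤ : ℕ∞) ψ) (hψc : HasCompactSupport ψ) :
    |∫ x : E d, ∫ v : E d, maxwellian d v * z (x, v) *
        fderiv ℝ ψ (x, v) ((0 : E d), EuclideanSpace.single i 1)| ≤
      ((∫ x : E d, ∫ v : E d, maxwellian d v * z (x, v) ^ 2) ^ ((1:ℝ)/2)) *
      ((∫ x : E d, ∫ v : E d,
          maxwellian d v * fderiv ℝ ψ (x, v) ((0 : E d), EuclideanSpace.single i 1) ^ 2)
        ^ ((1:ℝ)/2)) := by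
  set e : E d := EuclideanSpace.single i 1 with he
  have hμc : Continuous (maxwellian d) := (maxwellian_contDiff d).continuous
  have hμ0 : ∀ v : E d, 0 ≤ maxwellian d v := fun v => (maxwellian_pos v).le
  have hfdc : Continuous (fderiv ℝ ψ) := hψ.continuous_fderiv (by simp)
  have hDc : Continuous fun p : E d × E d => fderiv ℝ ψ p ((0 : E d), e) :=
    hfdc.clm_apply continuous_const
  have hDs : HasCompactSupport fun p : E d × E d => fderiv ℝ ψ p ((0 : E d), e) :=
    hψc.fderiv_apply ℝ ((0 : E d), e)
  have hD2int : Integrable (fun p : E d × E d =>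
      maxwellian d p.2 * fderiv ℝ ψ p ((0:E d), e) ^ 2) := by
    apply Continuous.integrable_of_hasCompactSupport
    · exact (hμc.comp continuous_snd).mul (hDc.pow 2)
    · exact (hDs.comp_left (g := fun t : ℝ => t ^ 2) (by simp)).mul_left
  have hzY' : Integrable (fun p : E d × E d => maxwellian d p.2 * z p ^ 2)
      ((volume : Measure (E d)).prod volume) := by rwa [← Measure.volume_eq_prod]
  have hD2int' : Integrable (fun p : E d × E d =>
      maxwellian d p.2 * fderiv ℝ ψ p ((0:E d), e) ^ 2)
      ((volume : Measure (E d)).prod volume) := by rwa [← Measure.volume_eq_prod]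
  set A : E d → ℝ := fun x => ∫ v : E d, maxwellian d v * z (x, v) ^ 2 with hA
  set B : E d → ℝ := fun x => ∫ v : E d, maxwellian d v * fderiv ℝ ψ (x, v) ((0:E d), e) ^ 2
    with hB
  have hAint : Integrable A := by simpa using hzY'.integral_prod_left
  have hBint : Integrable B := by simpa using hD2int'.integral_prod_left
  have hA0 : ∀ x, 0 ≤ A x := fun x => integral_nonneg fun v => mul_nonneg (hμ0 v) (sq_nonneg _)
  have hB0 : ∀ x, 0 ≤ B x := fun x => integral_nonneg fun v => mul_nonneg (hμ0 v) (sq_nonneg _)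
  set a : E d → ℝ := fun x => Real.sqrt (A x) with ha
  set b : E d → ℝ := fun x => Real.sqrt (B x) with hb
  have ham : AEStronglyMeasurable a volume :=
    Real.continuous_sqrt.comp_aestronglyMeasurable hAint.aestronglyMeasurable
  have hbm : AEStronglyMeasurable b volume :=
    Real.continuous_sqrt.comp_aestronglyMeasurable hBint.aestronglyMeasurable
  have ha2 : Integrable (fun x => a x ^ 2) :=
    hAint.congr (Filter.Eventually.of_forall fun x => (Real.sq_sqrt (hA0 x)).symm)
  have hb2 : Integrable (fun x => b x ^ 2) :=
    hBint.congr (Filter.Eventually.of_forall fun x => (Real.sq_sqrt (hB0 x)).symm)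
  have haL2 : MemLp a (ENNReal.ofReal 2) := by
    rw [show ENNReal.ofReal 2 = 2 by norm_num]
    exact (memLp_two_iff_integrable_sq ham).2 ha2
  have hbL2 : MemLp b (ENNReal.ofReal 2) := by
    rw [show ENNReal.ofReal 2 = 2 by norm_num]
    exact (memLp_two_iff_integrable_sq hbm).2 hb2
  have habi : Integrable (fun x => a x * b x) := by
    refine Integrable.mono' ((ha2.add hb2).div_const 2) (ham.mul hbm)
      (Filter.Eventually.of_forall fun x => ?_)
    have hax : a x = Real.sqrt (A x) := rfl
    have hbx : b x = Real.sqrt (B x) := rfl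
    rw [Real.norm_eq_abs, abs_of_nonneg (mul_nonneg (Real.sqrt_nonneg _) (Real.sqrt_nonneg _))]
    simp only [Pi.add_apply, Pi.div_apply]
    nlinarith [sq_nonneg (a x - b x), hax, hbx]
  have hae : ∀ᵐ x : E d, |∫ v : E d, maxwellian d v * z (x, v) *
      fderiv ℝ ψ (x, v) ((0:E d), e)| ≤ a x * b x := by
    filter_upwards [hzY'.prod_right_ae] with x hAx
    exact innerCS d z hz i ψ hψ hψc x hAx
  have h22 : Real.HolderConjugate 2 2 := Real.HolderConjugate.two_two
  have key := integral_mul_le_Lp_mul_Lq_of_nonneg h22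
    (Filter.Eventually.of_forall fun x => Real.sqrt_nonneg _)
    (Filter.Eventually.of_forall fun x => Real.sqrt_nonneg _) haL2 hbL2
  have e1 : (∫ x : E d, a x ^ (2:ℝ)) = ∫ x : E d, A x := by
    congr 1; funext x
    rw [show ((2:ℝ)) = ((2:ℕ):ℝ) by norm_num, Real.rpow_natCast, Real.sq_sqrt (hA0 x)]
  have e2 : (∫ x : E d, b x ^ (2:ℝ)) = ∫ x : E d, B x := by
    congr 1; funext x
    rw [show ((2:ℝ)) = ((2:ℕ):ℝ) by norm_num, Real.rpow_natCast, Real.sq_sqrt (hB0 x)]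
  calc |∫ x : E d, ∫ v : E d, maxwellian d v * z (x, v) * fderiv ℝ ψ (x, v) ((0:E d), e)|
      = ‖∫ x : E d, ∫ v : E d, maxwellian d v * z (x, v) * fderiv ℝ ψ (x, v) ((0:E d), e)‖ :=
        (Real.norm_eq_abs _).symm
    _ ≤ ∫ x : E d, ‖∫ v : E d, maxwellian d v * z (x, v) * fderiv ℝ ψ (x, v) ((0:E d), e)‖ :=
        norm_integral_le_integral_norm _
    _ ≤ ∫ x : E d, a x * b x := by
        refine integral_mono_of_nonneg (Filter.Eventually.of_forall fun x => norm_nonneg _)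
          habi ?_
        filter_upwards [hae] with x hx
        rw [Real.norm_eq_abs]
        exact hx
    _ ≤ (∫ x : E d, a x ^ (2:ℝ)) ^ (1/(2:ℝ)) * (∫ x : E d, b x ^ (2:ℝ)) ^ (1/(2:ℝ)) := key
    _ = (∫ x : E d, A x) ^ ((1:ℝ)/2) * (∫ x : E d, B x) ^ ((1:ℝ)/2) := by rw [e1, e2]

lemma ydnorm_bound (d : ℕ) (i : Fin d)
    (ψ : E d × E d → ℝ) (hψ : ContDiff ℝ (⊤ : ℕ∞) ψ) (hψc : HasCompactSupport ψ) :
    ((∫ x : E d, ∫ v : E d,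
        maxwellian d v * fderiv ℝ ψ (x, v) ((0 : E d), EuclideanSpace.single i 1) ^ 2)
      ^ ((1:ℝ)/2)) ≤ YdNorm d (gradV d ψ) := by
  set e : E d := EuclideanSpace.single i 1 with he
  have hμc : Continuous (maxwellian d) := (maxwellian_contDiff d).continuous
  have hμ0 : ∀ v : E d, 0 ≤ maxwellian d v := fun v => (maxwellian_pos v).le
  have hfdc : Continuous (fderiv ℝ ψ) := hψ.continuous_fderiv (by simp)
  have hDc : Continuous fun p : E d × E d => fderiv ℝ ψ p ((0 : E d), e) :=
    hfdc.clm_apply continuous_const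
  have hDs : HasCompactSupport fun p : E d × E d => fderiv ℝ ψ p ((0 : E d), e) :=
    hψc.fderiv_apply ℝ ((0 : E d), e)
  have hD2int : Integrable (fun p : E d × E d =>
      maxwellian d p.2 * fderiv ℝ ψ p ((0:E d), e) ^ 2) := by
    apply Continuous.integrable_of_hasCompactSupport
    · exact (hμc.comp continuous_snd).mul (hDc.pow 2)
    · exact (hDs.comp_left (g := fun t : ℝ => t ^ 2) (by simp)).mul_left
  have hgrad_eq : ∀ p : E d × E d, gradV d ψ p =
      (InnerProductSpace.toDual ℝ (E d)).symm
        ((fderiv ℝ ψ p).comp (ContinuousLinearMap.inr ℝ (E d) (E d))) := by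
    intro p
    simp only [gradV, gradient]
    rw [slice_fderiv hψ p.1 p.2]
  have hDgrad : ∀ p : E d × E d, fderiv ℝ ψ p ((0:E d), e) = ⟪gradV d ψ p, e⟫ := by
    intro p
    rw [hgrad_eq p, InnerProductSpace.toDual_symm_apply]
    simp
  have hDle : ∀ p : E d × E d, fderiv ℝ ψ p ((0:E d), e) ^ 2 ≤ ‖gradV d ψ p‖ ^ 2 := by
    intro p
    rw [hDgrad p, ← sq_abs]
    have h1 : |⟪gradV d ψ p, e⟫| ≤ ‖gradV d ψ p‖ := by
      simpa [he, EuclideanSpace.norm_single] using abs_real_inner_le_norm (gradV d ψ p) e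
    exact pow_le_pow_left₀ (abs_nonneg _) h1 2
  have hgradc : Continuous (gradV d ψ) := by
    have : Continuous fun p : E d × E d =>
        (InnerProductSpace.toDual ℝ (E d)).symm
          ((fderiv ℝ ψ p).comp (ContinuousLinearMap.inr ℝ (E d) (E d))) :=
      (InnerProductSpace.toDual ℝ (E d)).symm.continuous.comp (hfdc.clm_comp continuous_const)
    exact this.congr fun p => (hgrad_eq p).symm
  have hgrads : HasCompactSupport (gradV d ψ) := by
    have h := (hψc.fderiv ℝ).comp_left
      (g := fun L : (E d × E d) →L[ℝ] ℝ =>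
        (InnerProductSpace.toDual ℝ (E d)).symm
          (L.comp (ContinuousLinearMap.inr ℝ (E d) (E d)))) (by simp)
    have heq : gradV d ψ = fun p => (InnerProductSpace.toDual ℝ (E d)).symm
        ((fderiv ℝ ψ p).comp (ContinuousLinearMap.inr ℝ (E d) (E d))) := funext hgrad_eq
    rw [heq]
    exact h
  have hgrad2int : Integrable (fun p : E d × E d => maxwellian d p.2 * ‖gradV d ψ p‖ ^ 2) := by
    apply Continuous.integrable_of_hasCompactSupport
    · exact (hμc.comp continuous_snd).mul (hgradc.norm.pow 2)
    · exact (hgrads.comp_left (g := fun u : E d => ‖u‖ ^ 2) (by simp)).mul_left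
  have hD2int' : Integrable (fun p : E d × E d =>
      maxwellian d p.2 * fderiv ℝ ψ p ((0:E d), e) ^ 2)
      ((volume : Measure (E d)).prod volume) := by rwa [← Measure.volume_eq_prod]
  have hgrad2int' : Integrable (fun p : E d × E d => maxwellian d p.2 * ‖gradV d ψ p‖ ^ 2)
      ((volume : Measure (E d)).prod volume) := by rwa [← Measure.volume_eq_prod]
  have hle : (∫ x : E d, ∫ v : E d, maxwellian d v * fderiv ℝ ψ (x, v) ((0:E d), e) ^ 2) ≤
      ∫ x : E d, ∫ v : E d, maxwellian d v * ‖gradV d ψ (x, v)‖ ^ 2 := by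
    have h1 : (∫ x : E d, ∫ v : E d, maxwellian d v * fderiv ℝ ψ (x, v) ((0:E d), e) ^ 2) =
        ∫ p : E d × E d, maxwellian d p.2 * fderiv ℝ ψ p ((0:E d), e) ^ 2
          ∂((volume : Measure (E d)).prod volume) := integral_integral hD2int'
    have h3 : (∫ x : E d, ∫ v : E d, maxwellian d v * ‖gradV d ψ (x, v)‖ ^ 2) =
        ∫ p : E d × E d, maxwellian d p.2 * ‖gradV d ψ p‖ ^ 2
          ∂((volume : Measure (E d)).prod volume) := integral_integral hgrad2int'
    rw [h1, h3]
    exact integral_mono hD2int' hgrad2int'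
      (fun p => mul_le_mul_of_nonneg_left (hDle p) (hμ0 p.2))
  have h0 : 0 ≤ ∫ x : E d, ∫ v : E d, maxwellian d v * fderiv ℝ ψ (x, v) ((0:E d), e) ^ 2 :=
    integral_nonneg fun x => integral_nonneg fun v => mul_nonneg (hμ0 v) (sq_nonneg _)
  rw [YdNorm]
  exact Real.rpow_le_rpow h0 hle (by norm_num)

end Statement15Aux

/-- For `z` with `v ↦ z(x,v)` continuously differentiable and
finite `‖z‖_Y`, and any `i` and test function `ψ ∈ C_c^∞(ℝ^{2d})`:
`|∫∫ ∂_{v_i}(μ z) ψ| = |∫∫ μ z ∂_{v_i} ψ| ≤ ‖z‖_Y ‖∇_v ψ‖_{Y^d}`, expressing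
that the `i`-th component of `S z = ∇_v z − z v` is bounded from `Y` to `V_v'`


with norm at most `1`. -/
theorem statement15 (d : ℕ) (hd : 1 ≤ d)
    (z : E d × E d → ℝ)
    (hz : ∀ x : E d, ContDiff ℝ 1 (fun v => z (x, v)))
    (hzY : Integrable (fun p : E d × E d => maxwellian d p.2 * z p ^ 2))
    (i : Fin d)
    (ψ : E d × E d → ℝ) (hψ : ContDiff ℝ (⊤ : ℕ∞) ψ) (hψc : HasCompactSupport ψ) :
    |∫ x : E d, ∫ v : E d,
        fderiv ℝ (fun w => maxwellian d w * z (x, w)) v (EuclideanSpace.single i 1) *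
          ψ (x, v)| =
      |∫ x : E d, ∫ v : E d, maxwellian d v * z (x, v) *
          fderiv ℝ (fun w => ψ (x, w)) v (EuclideanSpace.single i 1)| ∧
    |∫ x : E d, ∫ v : E d, maxwellian d v * z (x, v) *
        fderiv ℝ (fun w => ψ (x, w)) v (EuclideanSpace.single i 1)| ≤
      Ynorm d z * YdNorm d (gradV d ψ) := by
  refine ⟨?_, ?_⟩
  · have key1 := Statement15Aux.ibp_slice d z hz i ψ hψ hψc
    simp only [key1]
    rw [integral_neg, abs_neg]
  · have hrw : ∀ (x v : E d), fderiv ℝ (fun w => ψ (x, w)) v (EuclideanSpace.single i 1)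
        = fderiv ℝ ψ (x, v) ((0 : E d), EuclideanSpace.single i 1) := by
      intro x v
      rw [Statement15Aux.slice_fderiv hψ x v]
      simp
    simp only [hrw]
    have h1 := Statement15Aux.outerCS d z hz hzY i ψ hψ hψc
    have h2 := Statement15Aux.ydnorm_bound d i ψ hψ hψc
    have h0 : 0 ≤ (∫ x : E d, ∫ v : E d, maxwellian d v * z (x, v) ^ 2) ^ ((1:ℝ)/2) :=
      Real.rpow_nonneg (integral_nonneg fun x => integral_nonneg fun v =>
        mul_nonneg (Statement15Aux.maxwellian_pos v).le (sq_nonneg _)) _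
    have hY : Ynorm d z = (∫ x : E d, ∫ v : E d, maxwellian d v * z (x, v) ^ 2) ^ ((1:ℝ)/2) := rfl
    rw [hY]
    exact le_trans h1 (mul_le_mul_of_nonneg_left h2 h0)
end
end
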